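/- arXiv:1106.1399 — 5 statements merged into one kernel-verified Lean document; each statement's English description precedes it below -/
import Mathlib

section
/- Let 1 ≤ k ≤ n and let pr_{1,3} : W → W denote the projection onto span(w_1,…,w_k,w_{2n−k+1},…,w_{2n}) that kills the coordinates of w_{k+1},…,w_{2n−k}. For a k-dimensional subspace U ⊆ W, the subspace pr_{1,3}(U) is isotropic if and only if there exists a linear automorphism g of W preserving the symplectic form, with g(w_m) = w_m for all k+1 ≤ m ≤ 2n−k and g(span(w_1,…,w_k,w_{2n−k+1},…,w_{2n})) = span(w_1,…,w_k,w_{2n−k+1},…,w_{2n}), such that g(U) ⊆ span(w_1,…,w_{2n−k}). -/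
noncomputable section

/-- The ambient 2n-dimensional complex vector space `W = ℂ^{2n}`. -/
abbrev Wsp (n : ℕ) := Fin (2*n) → ℂ

/-- The basis vector `w_k` (1-based index `k ∈ {1,…,2n}`). -/
def wvec (n k : ℕ) : Wsp n := fun i => if (i : ℕ) + 1 = k then 1 else 0

/-- The standard symplectic form: `⟨w_i, w_{2n+1-i}⟩ = 1` for `1 ≤ i ≤ n`,
and `⟨w_i, w_j⟩ = 0` for `j ≠ 2n+1-i`. -/
def sform (n : ℕ) (x y : Wsp n) : ℂ :=
  ∑ i : Fin (2*n), (if (i : ℕ) < n then 1 else -1) * x i *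
    y ⟨2*n - 1 - (i : ℕ), by have := i.isLt; omega⟩

/-- A subspace is isotropic if the symplectic form vanishes on it. -/
def IsIsotropic (n : ℕ) (U : Submodule ℂ (Wsp n)) : Prop :=
  ∀ u ∈ U, ∀ v ∈ U, sform n u v = 0

/-- The projection `pr_k` along `w_k` (1-based). -/
def prj (n k : ℕ) : Wsp n →ₗ[ℂ] Wsp n where
  toFun x := fun i => if (i : ℕ) + 1 = k then 0 else x i
  map_add' x y := by funext i; by_cases h : (i : ℕ) + 1 = k <;> simp [h]
  map_smul' c x := by funext i; by_cases h : (i : ℕ) + 1 = k <;> simp [h]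

/-- The subspace `W_{i,j} = span(w_1,…,w_i,w_{j+1},…,w_{2n})` (1-based). -/
def WIJ (n i j : ℕ) : Submodule ℂ (Wsp n) :=
  Submodule.span ℂ (wvec n '' {k | (1 ≤ k ∧ k ≤ i) ∨ (j + 1 ≤ k ∧ k ≤ 2*n)})

/-- Orthogonal complement with respect to the symplectic form. -/
def sperp (n : ℕ) (U : Submodule ℂ (Wsp n)) : Submodule ℂ (Wsp n) where
  carrier := {x | ∀ u ∈ U, sform n x u = 0}
  zero_mem' := by intro u hu; simp [sform]
  add_mem' := by
    intro a b ha hb u hu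
    have ha' := ha u hu
    have hb' := hb u hu
    simp only [sform, Pi.add_apply, add_mul, mul_add, Finset.sum_add_distrib] at *
    rw [ha', hb', add_zero]
  smul_mem' := by
    intro c a ha u hu
    have ha' := ha u hu
    simp only [sform, Pi.smul_apply, smul_eq_mul] at *
    calc ∑ i : Fin (2*n), (if (i : ℕ) < n then 1 else -1) * (c * a i) *
          u ⟨2*n - 1 - (i : ℕ), by have := i.isLt; omega⟩
        = c * ∑ i : Fin (2*n), (if (i : ℕ) < n then 1 else -1) * a i *
          u ⟨2*n - 1 - (i : ℕ), by have := i.isLt; omega⟩ := by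
          rw [Finset.mul_sum]; congr 1; funext i; ring
      _ = 0 := by rw [ha', mul_zero]

/-- The points of the Bott–Samelson type resolution `SpR_{2n}`:
collections `(V_{i,j})` for `1 ≤ i ≤ j`, `i+j ≤ 2n`. -/
structure IsSpR (n : ℕ) (V : ℕ → ℕ → Submodule ℂ (Wsp n)) : Prop where
  dim : ∀ i j, 1 ≤ i → i ≤ j → i + j ≤ 2*n → Module.finrank ℂ (V i j) = i
  sub : ∀ i j, 1 ≤ i → i ≤ j → i + j ≤ 2*n → V i j ≤ WIJ n i j
  mono : ∀ i j, 1 ≤ i → i + 1 ≤ j → (i + 1) + j ≤ 2*n → V i j ≤ V (i+1) j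
  proj : ∀ i j, 1 ≤ i → i ≤ j → i + (j+1) ≤ 2*n →
    Submodule.map (prj n (j+1)) (V i j) ≤ V i (j+1)
  isot : ∀ i, 1 ≤ i → i ≤ n → IsIsotropic n (V i (2*n - i))

/-- A point of `SpR_{2n}` lies in the divisor `Z_{i,j}` if
`V_{i,j} = V_{i-1,j+1} + ℂ w_{j+1}` (with `V_0 = 0`). -/
def InZ (n : ℕ) (V : ℕ → ℕ → Submodule ℂ (Wsp n)) (i j : ℕ) : Prop :=
  V i j = (if i = 1 then ⊥ else V (i-1) (j+1)) ⊔ Submodule.span ℂ {wvec n (j+1)}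

/-- The projection `pr_{1,3}` onto `span(w_1,…,w_k,w_{2n-k+1},…,w_{2n})`,
killing the coordinates of `w_{k+1},…,w_{2n-k}`. -/
def pr13 (n k : ℕ) : Wsp n →ₗ[ℂ] Wsp n where
  toFun x := fun i => if k + 1 ≤ (i : ℕ) + 1 ∧ (i : ℕ) + 1 ≤ 2*n - k then 0 else x i
  map_add' x y := by
    funext i
    by_cases h : k + 1 ≤ (i : ℕ) + 1 ∧ (i : ℕ) + 1 ≤ 2*n - k
    · simp only [Pi.add_apply, if_pos h, add_zero]
    · simp only [Pi.add_apply, if_neg h]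
  map_smul' c x := by
    funext i
    by_cases h : k + 1 ≤ (i : ℕ) + 1 ∧ (i : ℕ) + 1 ≤ 2*n - k
    · simp only [Pi.smul_apply, smul_eq_mul, if_pos h, mul_zero, RingHom.id_apply]
    · simp only [Pi.smul_apply, smul_eq_mul, if_neg h, RingHom.id_apply]

/-!
`pr13 n k` is the projection onto the symplectic subspace `C = W_{k,2n-k}` along its
orthogonal complement `M = span(w_{k+1}, …, w_{2n-k})`.

If `pr13 n k (U)` is isotropic, symplectic Gram–Schmidt inside `C` produces a symplectic basis
`(e, f)` of `C` with `pr13 n k (U) ⊆ span e`. The isometry of `C` sending `(e, f)` to the standard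
basis `(w_1, …, w_k; w_{2n}, …, w_{2n-k+1})`, extended by the identity on `M`, moves `U` into
`span(w_1, …, w_k) ⊕ M = W_{2n-k,2n}`.

Conversely, an isometry `g` fixing `M` and preserving `C` commutes with `pr13 n k`, so
`g (pr13 n k U) = pr13 n k (g U) ⊆ span(w_1, …, w_k)`, which is isotropic.
-/

open Module Submodule LinearMap

namespace LinearMap.IsProj

variable {R M : Type*} [Ring R] [AddCommGroup M] [Module R M] {p : Submodule R M}
  {π : M →ₗ[R] M}

lemma sub_apply_mem_ker (hπ : IsProj p π) (x : M) : x - π x ∈ ker π := by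
  simp [hπ.map_id _ (hπ.map_mem x)]

lemma apply_comm {g : M →ₗ[R] M} (hπ : IsProj p π)
    (hgp : ∀ x ∈ p, g x ∈ p) (hgker : ∀ y ∈ ker π, g y = y) (x : M) : π (g x) = g (π x) := by
  have hx : g x = g (π x) + (x - π x) := by
    rw [← hgker _ (hπ.sub_apply_mem_ker x), ← map_add, add_sub_cancel]
  rw [hx, map_add, hπ.map_id _ (hgp _ (hπ.map_mem x)), mem_ker.1 (hπ.sub_apply_mem_ker x),
    add_zero]

end LinearMap.IsProj

namespace LinearMap.BilinForm

variable {K V : Type*} [Field K] [AddCommGroup V] [Module K V] {B : LinearMap.BilinForm K V}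

variable (B) in
structure IsSymplecticFamily {ι : Type*} [DecidableEq ι] (e f : ι → V) : Prop where
  apply_e_e : ∀ i j, B (e i) (e j) = 0
  apply_f_f : ∀ i j, B (f i) (f j) = 0
  apply_e_f : ∀ i j, B (e i) (f j) = if i = j then 1 else 0

namespace IsSymplecticFamily

variable {ι : Type*} [DecidableEq ι] {e f e' f' : ι → V}

lemma apply_f_e (hB : B.IsAlt) (h : IsSymplecticFamily B e f) (i j : ι) :
    B (f i) (e j) = if i = j then -1 else 0 := by
  rw [← LinearMap.IsAlt.neg hB (e j) (f i), h.apply_e_f]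
  split_ifs <;> simp_all [eq_comm]

lemma linearIndependent [Fintype ι] (h : IsSymplecticFamily B e f) :
    LinearIndependent K (Sum.elim e f) := by
  rw [Fintype.linearIndependent_iff]
  intro c hc
  have pair_f (j : ι) : B (∑ a, c a • Sum.elim e f a) (f j) = c (.inl j) := by
    simp [Fintype.sum_sum_type, h.apply_e_f, h.apply_f_f]
  have pair_e (j : ι) : B (e j) (∑ a, c a • Sum.elim e f a) = c (.inr j) := by
    simp [Fintype.sum_sum_type, h.apply_e_f, h.apply_e_e]
  rintro (j | j)
  · rw [← pair_f j, hc, map_zero, LinearMap.zero_apply]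
  · rw [← pair_e j, hc, map_zero]

lemma apply_sumElim_eq (hB : B.IsAlt) (h : IsSymplecticFamily B e f)
    (h' : IsSymplecticFamily B e' f') (a b : ι ⊕ ι) :
    B (Sum.elim e f a) (Sum.elim e f b) = B (Sum.elim e' f' a) (Sum.elim e' f' b) := by
  rcases a with i | i <;> rcases b with j | j <;>
    simp [h.apply_e_e, h.apply_f_f, h.apply_e_f, h.apply_f_e hB,
      h'.apply_e_e, h'.apply_f_f, h'.apply_e_f, h'.apply_f_e hB]

lemma isotropic_span (h : IsSymplecticFamily B e f) :
    ∀ x ∈ span K (Set.range e), ∀ y ∈ span K (Set.range e), B x y = 0 := by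
  intro x hx y hy
  induction hx using Submodule.span_induction with
  | mem x hx =>
    obtain ⟨i, rfl⟩ := hx
    induction hy using Submodule.span_induction with
    | mem y hy => obtain ⟨j, rfl⟩ := hy; exact h.apply_e_e i j
    | zero => simp
    | add y z _ _ hy hz => simp [hy, hz]
    | smul c y _ hy => simp [hy]
  | zero => simp
  | add x z _ _ hx hz => simp [hx, hz]
  | smul c x _ hx => simp [hx]

end IsSymplecticFamily

section HyperbolicPair

variable (hB : B.IsAlt) {W : Submodule K V} {e f : V} (hef : B e f = 1)
include hB hef

lemma add_smul_sub_smul_mem (he : e ∈ W) (hf : f ∈ W) {y : V} (hy : y ∈ W) :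
    y + B f y • e - B e y • f ∈ W ⊓ ker (B e) ⊓ ker (B f) := by
  have hfe : B f e = -1 := by rw [← LinearMap.IsAlt.neg hB, hef]
  refine ⟨⟨?_, ?_⟩, ?_⟩
  · exact W.sub_mem (W.add_mem hy (W.smul_mem _ he)) (W.smul_mem _ hf)
  · simp [hB e, hef]
  · simp [hB f, hfe]

lemma eq_zero_of_mem_inf_ker (hW : ∀ x ∈ W, (∀ y ∈ W, B x y = 0) → x = 0)
    (he : e ∈ W) (hf : f ∈ W) {x : V} (hx : x ∈ W ⊓ ker (B e) ⊓ ker (B f))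
    (hx₀ : ∀ y ∈ W ⊓ ker (B e) ⊓ ker (B f), B x y = 0) : x = 0 := by
  obtain ⟨⟨hxW, hxe⟩, hxf⟩ := hx
  refine hW x hxW fun y hy => ?_
  have hy' := hx₀ _ (add_smul_sub_smul_mem hB hef he hf hy)
  have hxe' : B x e = 0 := by rw [← LinearMap.IsAlt.neg hB, mem_ker.1 hxe, neg_zero]
  have hxf' : B x f = 0 := by rw [← LinearMap.IsAlt.neg hB, mem_ker.1 hxf, neg_zero]
  simpa [hxe', hxf'] using hy'

lemma span_range_cons_eq (he : e ∈ W) (hf : f ∈ W) {m : ℕ} {e' f' : Fin m → V}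
    (hspan : span K (Set.range e' ∪ Set.range f') = W ⊓ ker (B e) ⊓ ker (B f)) :
    span K (Set.range (Fin.cons e e' : Fin (m + 1) → V) ∪ Set.range (Fin.cons f f')) = W := by
  set S := span K (Set.range (Fin.cons e e' : Fin (m + 1) → V) ∪ Set.range (Fin.cons f f'))
  have heS : e ∈ S := subset_span (.inl ⟨0, rfl⟩)
  have hfS : f ∈ S := subset_span (.inr ⟨0, rfl⟩)
  have hW' : span K (Set.range e' ∪ Set.range f') ≤ W := hspan ▸ inf_le_left.trans inf_le_left
  refine le_antisymm ?_ fun y hy => ?_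
  · rw [span_le]
    rintro _ (⟨i, rfl⟩ | ⟨i, rfl⟩) <;> cases i using Fin.cases
    · exact he
    · exact hW' (subset_span (.inl ⟨_, rfl⟩))
    · exact hf
    · exact hW' (subset_span (.inr ⟨_, rfl⟩))
  have hW'S : span K (Set.range e' ∪ Set.range f') ≤ S := by
    rw [span_le]
    rintro _ (⟨i, rfl⟩ | ⟨i, rfl⟩)
    · exact subset_span (.inl ⟨i.succ, rfl⟩)
    · exact subset_span (.inr ⟨i.succ, rfl⟩)
  have hy' := hW'S (hspan ▸ add_smul_sub_smul_mem hB hef he hf hy)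
  have hsum : y = (y + B f y • e - B e y • f) - B f y • e + B e y • f := by abel
  rw [hsum]
  exact S.add_mem (S.sub_mem hy' (S.smul_mem _ heS)) (S.smul_mem _ hfS)

lemma le_span_range_cons (he : e ∈ W) (hf : f ∈ W) {P : Submodule K V} (hPW : P ≤ W)
    (hP : ∀ x ∈ P, ∀ y ∈ P, B x y = 0) (heP : e ∈ P) {m : ℕ} {e' : Fin m → V}
    (hP' : P ⊓ (W ⊓ ker (B e) ⊓ ker (B f)) ≤ span K (Set.range e')) :
    P ≤ span K (Set.range (Fin.cons e e' : Fin (m + 1) → V)) := by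
  intro p hp
  set E := span K (Set.range (Fin.cons e e' : Fin (m + 1) → V))
  have hE' : span K (Set.range e') ≤ E := span_mono (by rintro _ ⟨i, rfl⟩; exact ⟨i.succ, rfl⟩)
  have hp' := add_smul_sub_smul_mem hB hef he hf (hPW hp)
  rw [hP e heP p hp, zero_smul, sub_zero] at hp'
  have hsum : p = (p + B f p • e) - B f p • e := by abel
  rw [hsum]
  exact E.sub_mem (hE' (hP' ⟨P.add_mem hp (P.smul_mem _ heP), hp'⟩))
    (E.smul_mem _ (subset_span ⟨0, rfl⟩))

end HyperbolicPair

lemma IsSymplecticFamily.cons {m : ℕ} {e f : V} (hB : B.IsAlt) (hef : B e f = 1)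
    {e' f' : Fin m → V} (h : IsSymplecticFamily B e' f')
    (he' : ∀ i, B e (e' i) = 0 ∧ B f (e' i) = 0) (hf' : ∀ i, B e (f' i) = 0 ∧ B f (f' i) = 0) :
    IsSymplecticFamily B (Fin.cons e e') (Fin.cons f f') := by
  have swap {x y : V} (h : B x y = 0) : B y x = 0 := (LinearMap.IsAlt.eq_iff hB).1 h
  refine ⟨fun i j => ?_, fun i j => ?_, fun i j => ?_⟩ <;>
    cases i using Fin.cases <;> cases j using Fin.cases
  all_goals simp [hB e, hB f, hef, h.apply_e_e, h.apply_f_f, h.apply_e_f, (he' _).1, (hf' _).1,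
      (hf' _).2, swap (he' _).1, swap (he' _).2, swap (hf' _).2,
      (Fin.succ_ne_zero _).symm]

theorem exists_isSymplecticFamily_of_isotropic [FiniteDimensional K V] (hB : B.IsAlt)
    (W : Submodule K V) (hW : ∀ x ∈ W, (∀ y ∈ W, B x y = 0) → x = 0) (P : Submodule K V)
    (hPW : P ≤ W) (hP : ∀ x ∈ P, ∀ y ∈ P, B x y = 0) :
    ∃ (m : ℕ) (e f : Fin m → V), IsSymplecticFamily B e f ∧
      span K (Set.range e ∪ Set.range f) = W ∧ P ≤ span K (Set.range e) := by
  induction hd : finrank K W using Nat.strong_induction_on generalizing W P with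
  | _ d ih =>
  by_cases hW0 : W = ⊥
  · subst hW0
    exact ⟨0, Fin.elim0, Fin.elim0, ⟨fun i => i.elim0, fun i => i.elim0, fun i => i.elim0⟩,
      by simp, hPW.trans bot_le⟩
  -- taking `e ∈ P` when `P ≠ ⊥` is what puts `P` inside the span of the `e`-vectors
  obtain ⟨e, heW, he0, heP⟩ : ∃ e ∈ W, e ≠ 0 ∧ (P = ⊥ ∨ e ∈ P) := by
    by_cases hP0 : P = ⊥
    · obtain ⟨e, he, he0⟩ := (Submodule.ne_bot_iff W).1 hW0
      exact ⟨e, he, he0, .inl hP0⟩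
    · obtain ⟨e, he, he0⟩ := (Submodule.ne_bot_iff P).1 hP0
      exact ⟨e, hPW he, he0, .inr he⟩
  obtain ⟨f₀, hf₀W, hf₀⟩ : ∃ f₀ ∈ W, B e f₀ ≠ 0 := by
    by_contra! h
    exact he0 (hW e heW h)
  set f := (B e f₀)⁻¹ • f₀
  have hfW : f ∈ W := W.smul_mem _ hf₀W
  have hef : B e f = 1 := by simp [f, hf₀]
  set W' := W ⊓ ker (B e) ⊓ ker (B f)
  have hW'lt : W' < W := by
    refine lt_of_le_of_ne (inf_le_left.trans inf_le_left) fun h => ?_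
    have hfe : B f e = 0 := (h.symm ▸ heW : e ∈ W').2
    rw [← LinearMap.IsAlt.neg hB, hef] at hfe
    exact one_ne_zero (neg_eq_zero.1 hfe)
  obtain ⟨m, e', f', h, hspan, hP'⟩ := ih _ (hd ▸ Submodule.finrank_lt_finrank_of_lt hW'lt) W'
    (fun x hx hx₀ => eq_zero_of_mem_inf_ker hB hef hW heW hfW hx hx₀) (P ⊓ W') inf_le_right
    (fun x hx y hy => hP x hx.1 y hy.1) rfl
  have hW' : ∀ x ∈ span K (Set.range e' ∪ Set.range f'), B e x = 0 ∧ B f x = 0 := by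
    rw [hspan]
    exact fun x hx => ⟨hx.1.2, hx.2⟩
  refine ⟨m + 1, Fin.cons e e', Fin.cons f f',
    h.cons hB hef (fun i => hW' _ (subset_span (.inl ⟨i, rfl⟩)))
      (fun i => hW' _ (subset_span (.inr ⟨i, rfl⟩))), span_range_cons_eq hB hef heW hfW hspan, ?_⟩
  rcases heP with rfl | heP
  · exact bot_le
  · exact le_span_range_cons hB hef heW hfW hPW hP heP hP'

theorem exists_isometry_extend_of_isCompl (hB : B.IsAlt) {C C' M : Submodule K V}
    (hC : IsCompl C M) (hC' : IsCompl C' M) (hCM : ∀ x ∈ C, ∀ y ∈ M, B x y = 0)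
    (hC'M : ∀ x ∈ C', ∀ y ∈ M, B x y = 0) (φ : C ≃ₗ[K] C')
    (hφ : ∀ x y : C, B (φ x) (φ y) = B x y) :
    ∃ g : V ≃ₗ[K] V, (∀ x y, B (g x) (g y) = B x y) ∧ (∀ x : C, g x = φ x) ∧
      ∀ y ∈ M, g y = y := by
  set g := (prodEquivOfIsCompl C M hC).symm ≪≫ₗ
    (φ.prodCongr (LinearEquiv.refl K M)) ≪≫ₗ prodEquivOfIsCompl C' M hC'
  have hg (c : C) (y : M) : g (c + y) = φ c + y := by
    rw [← coe_prodEquivOfIsCompl' C M hC (c, y)]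
    simp only [g, LinearEquiv.trans_apply, LinearEquiv.symm_apply_apply]
    simp
  have swap {x y : V} (h : B x y = 0) : B y x = 0 := (LinearMap.IsAlt.eq_iff hB).1 h
  refine ⟨g, fun x y => ?_, fun c => by simpa using hg c 0, fun y hy => by simpa using hg 0 ⟨y, hy⟩⟩
  obtain ⟨⟨c, z⟩, rfl⟩ := (prodEquivOfIsCompl C M hC).surjective x
  obtain ⟨⟨c', z'⟩, rfl⟩ := (prodEquivOfIsCompl C M hC).surjective y
  simp only [coe_prodEquivOfIsCompl', hg, map_add, LinearMap.add_apply, hφ,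
    hCM _ c.2 _ z'.2, swap (hCM _ c'.2 _ z.2), hC'M _ (φ c).2 _ z'.2, swap (hC'M _ (φ c').2 _ z.2)]

namespace IsSymplecticFamily

variable {ι : Type*} [DecidableEq ι] [Fintype ι] {e f e' f' : ι → V}

theorem exists_isometry (hB : B.IsAlt) (h : IsSymplecticFamily B e f)
    (h' : IsSymplecticFamily B e' f') {C M : Submodule K V}
    (hspan : span K (Set.range e ∪ Set.range f) = C)
    (hspan' : span K (Set.range e' ∪ Set.range f') = C) (hC : IsCompl C M)
    (hCM : ∀ x ∈ C, ∀ y ∈ M, B x y = 0) :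
    ∃ g : V ≃ₗ[K] V, (∀ x y, B (g x) (g y) = B x y) ∧ (∀ i, g (e i) = e' i) ∧
      (∀ i, g (f i) = f' i) ∧ ∀ y ∈ M, g y = y := by
  set b := Basis.span h.linearIndependent
  set b' := Basis.span h'.linearIndependent
  have hspan₁ : span K (Set.range (Sum.elim e f)) = C := by rwa [Set.Sum.elim_range]
  have hspan₁' : span K (Set.range (Sum.elim e' f')) = C := by rwa [Set.Sum.elim_range]
  set φ := b.equiv b' (Equiv.refl _)
  have hφb (a : ι ⊕ ι) : (φ (b a) : V) = Sum.elim e' f' a := by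
    simp [φ, b', Basis.span_apply]
  have hφ : ∀ x y, B (φ x) (φ y) = B x y := by
    have := LinearMap.ext_basis b b (B := B.compl₁₂ ((span K _).subtype ∘ₗ φ.toLinearMap)
      ((span K _).subtype ∘ₗ φ.toLinearMap)) (B' := B.compl₁₂ (span K _).subtype (span K _).subtype)
      fun a a' => by
        simp only [LinearMap.compl₁₂_apply, LinearMap.comp_apply, LinearEquiv.coe_coe,
          Submodule.subtype_apply, hφb]
        simp [b, Basis.span_apply, h.apply_sumElim_eq hB h']
    exact fun x y => congr($this x y)
  obtain ⟨g, hgB, hgφ, hgM⟩ := exists_isometry_extend_of_isCompl hB (hspan₁ ▸ hC) (hspan₁' ▸ hC)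
    (hspan₁ ▸ hCM) (hspan₁' ▸ hCM) φ hφ
  refine ⟨g, hgB, fun i => ?_, fun i => ?_, hgM⟩
  · simpa [b, Basis.span_apply] using (hgφ (b (.inl i))).trans (hφb _)
  · simpa [b, Basis.span_apply] using (hgφ (b (.inr i))).trans (hφb _)

end IsSymplecticFamily

section Projection

variable {C : Submodule K V} {π : V →ₗ[K] V}

lemma eq_zero_of_orthogonal_of_isProj (hnd : B.SeparatingLeft) (hπ : IsProj C π)
    (hCM : ∀ x ∈ C, ∀ y ∈ ker π, B x y = 0) {x : V} (hx : x ∈ C) (h : ∀ y ∈ C, B x y = 0) :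
    x = 0 := by
  refine hnd x fun y => ?_
  rw [← add_sub_cancel (π y) y, map_add, h _ (hπ.map_mem y), hCM x hx _ (hπ.sub_apply_mem_ker y),
    add_zero]

theorem exists_isometry_of_isotropic_map [FiniteDimensional K V] (hB : B.IsAlt)
    (hnd : B.SeparatingLeft) (hπ : IsProj C π) (hCM : ∀ x ∈ C, ∀ y ∈ ker π, B x y = 0)
    {k : ℕ} {e₀ f₀ : Fin k → V} (h₀ : IsSymplecticFamily B e₀ f₀)
    (hspan₀ : span K (Set.range e₀ ∪ Set.range f₀) = C) {U : Submodule K V}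
    (hU : ∀ x ∈ U.map π, ∀ y ∈ U.map π, B x y = 0) :
    ∃ g : V ≃ₗ[K] V, (∀ x y, B (g x) (g y) = B x y) ∧ (∀ y ∈ ker π, g y = y) ∧
      C.map (g : V →ₗ[K] V) = C ∧ U.map (g : V →ₗ[K] V) ≤ span K (Set.range e₀) ⊔ ker π := by
  have hUC : U.map π ≤ C := by
    rintro _ ⟨u, -, rfl⟩
    exact hπ.map_mem u
  obtain ⟨m, e, f, h, hspan, hUe⟩ :=
    exists_isSymplecticFamily_of_isotropic hB C
      (fun x hx => eq_zero_of_orthogonal_of_isProj hnd hπ hCM hx) _ hUC hU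
  obtain rfl : m = k := by
    have hm := finrank_span_eq_card h.linearIndependent
    have hk := finrank_span_eq_card h₀.linearIndependent
    rw [Set.Sum.elim_range, hspan] at hm
    rw [Set.Sum.elim_range, hspan₀] at hk
    simp only [Fintype.card_sum, Fintype.card_fin] at hm hk
    omega
  obtain ⟨g, hgB, hge, hgf, hgM⟩ := h.exists_isometry hB h₀ hspan hspan₀ hπ.isCompl hCM
  have hge' : (g : V →ₗ[K] V) ∘ e = e₀ := funext hge
  have hgf' : (g : V →ₗ[K] V) ∘ f = f₀ := funext hgf
  refine ⟨g, hgB, hgM, ?_, ?_⟩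
  · rw [← hspan, map_span, Set.image_union, ← Set.range_comp, ← Set.range_comp, hge', hgf',
      hspan, hspan₀]
  · rintro _ ⟨u, hu, rfl⟩
    have hgu : g u = g (π u) + (u - π u) := by
      rw [← hgM _ (hπ.sub_apply_mem_ker u), ← map_add, add_sub_cancel]
    have hgπu : g (π u) ∈ span K (Set.range e₀) := by
      rw [← hge', Set.range_comp, ← map_span]
      exact mem_map_of_mem (hUe ⟨u, hu, rfl⟩)
    rw [LinearEquiv.coe_coe, hgu]
    exact add_mem_sup hgπu (hπ.sub_apply_mem_ker u)

theorem isotropic_map_of_isometry (hπ : IsProj C π) {L : Submodule K V} (hLC : L ≤ C)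
    (hL : ∀ x ∈ L, ∀ y ∈ L, B x y = 0) {U : Submodule K V} (g : V ≃ₗ[K] V)
    (hgB : ∀ x y, B (g x) (g y) = B x y) (hgM : ∀ y ∈ ker π, g y = y)
    (hgC : C.map (g : V →ₗ[K] V) = C) (hgU : U.map (g : V →ₗ[K] V) ≤ L ⊔ ker π) :
    ∀ x ∈ U.map π, ∀ y ∈ U.map π, B x y = 0 := by
  have hcomm : ∀ x, π (g x) = g (π x) :=
    hπ.apply_comm (g := g) (fun x hx => hgC ▸ mem_map_of_mem hx) hgM
  have hπgU : ∀ u ∈ U, π (g u) ∈ L := by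
    intro u hu
    obtain ⟨l, hl, z, hz, hlz⟩ := mem_sup.1 (hgU (mem_map_of_mem hu))
    rw [LinearEquiv.coe_coe] at hlz
    rw [← hlz, map_add, hπ.map_id _ (hLC hl), mem_ker.1 hz, add_zero]
    exact hl
  rintro _ ⟨u, hu, rfl⟩ _ ⟨v, hv, rfl⟩
  rw [← hgB, ← hcomm, ← hcomm]
  exact hL _ (hπgU u hu) _ (hπgU v hv)

theorem isotropic_map_iff_exists_isometry [FiniteDimensional K V] (hB : B.IsAlt)
    (hnd : B.SeparatingLeft) (hπ : IsProj C π) (hCM : ∀ x ∈ C, ∀ y ∈ ker π, B x y = 0)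
    {k : ℕ} {e₀ f₀ : Fin k → V} (h₀ : IsSymplecticFamily B e₀ f₀)
    (hspan₀ : span K (Set.range e₀ ∪ Set.range f₀) = C) (U : Submodule K V) :
    (∀ x ∈ U.map π, ∀ y ∈ U.map π, B x y = 0) ↔
      ∃ g : V ≃ₗ[K] V, (∀ x y, B (g x) (g y) = B x y) ∧ (∀ y ∈ ker π, g y = y) ∧
        C.map (g : V →ₗ[K] V) = C ∧ U.map (g : V →ₗ[K] V) ≤ span K (Set.range e₀) ⊔ ker π :=
  ⟨exists_isometry_of_isotropic_map hB hnd hπ hCM h₀ hspan₀, fun ⟨g, hgB, hgM, hgC, hgU⟩ =>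
    isotropic_map_of_isometry hπ (hspan₀ ▸ span_mono Set.subset_union_left) h₀.isotropic_span
      g hgB hgM hgC hgU⟩

end Projection

end LinearMap.BilinForm

open LinearMap.BilinForm

lemma sform_eq_sum_rev (n : ℕ) (x y : Wsp n) :
    sform n x y = ∑ i : Fin (2 * n), (if (i : ℕ) < n then 1 else -1) * x i * y i.rev := by
  unfold sform
  congr! 3 with i
  ext
  simp only [Fin.val_rev]
  omega

def sformBilin (n : ℕ) : LinearMap.BilinForm ℂ (Wsp n) :=
  LinearMap.mk₂ ℂ (sform n)
    (fun x x' y => by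
      simp only [sform, Pi.add_apply, ← Finset.sum_add_distrib]
      exact Finset.sum_congr rfl fun i _ => by ring)
    (fun c x y => by
      simp only [sform, Pi.smul_apply, smul_eq_mul, Finset.mul_sum]
      exact Finset.sum_congr rfl fun i _ => by ring)
    (fun x y y' => by
      simp only [sform, Pi.add_apply, ← Finset.sum_add_distrib]
      exact Finset.sum_congr rfl fun i _ => by ring)
    (fun c x y => by
      simp only [sform, Pi.smul_apply, smul_eq_mul, Finset.mul_sum]
      exact Finset.sum_congr rfl fun i _ => by ring)

@[simp] lemma sformBilin_apply (n : ℕ) (x y : Wsp n) : sformBilin n x y = sform n x y := rfl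

lemma sformBilin_isAlt (n : ℕ) : (sformBilin n).IsAlt := by
  intro x
  rw [sformBilin_apply, sform_eq_sum_rev]
  have hS : ∑ i : Fin (2 * n), (if (i : ℕ) < n then 1 else -1) * x i * x i.rev =
      -∑ i : Fin (2 * n), (if (i : ℕ) < n then 1 else -1) * x i * x i.rev := by
    conv_lhs => rw [← Equiv.sum_comp Fin.revPerm]
    rw [← Finset.sum_neg_distrib]
    refine Finset.sum_congr rfl fun i _ => ?_
    simp only [Fin.revPerm_apply, Fin.rev_rev, Fin.val_rev]
    split_ifs <;> first | omega | ring
  exact CharZero.eq_neg_self_iff.1 hS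

lemma sform_single_right (n : ℕ) (x : Wsp n) (b : Fin (2 * n)) :
    sform n x (Pi.single b 1) = (if (b.rev : ℕ) < n then 1 else -1) * x b.rev := by
  rw [sform_eq_sum_rev, Finset.sum_eq_single b.rev (fun i _ hi => by simp [Fin.rev_eq_iff, hi])
    (by simp)]
  simp

lemma sformBilin_separatingLeft (n : ℕ) : (sformBilin n).SeparatingLeft := by
  intro x hx
  funext m
  have hm := hx (Pi.single m.rev 1)
  rw [sformBilin_apply, sform_single_right, Fin.rev_rev] at hm
  split_ifs at hm <;> simpa using hm

lemma sform_eq_zero_of_forall (n : ℕ) {x y : Wsp n} (h : ∀ i, x i = 0 ∨ y i.rev = 0) :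
    sform n x y = 0 := by
  rw [sform_eq_sum_rev]
  refine Finset.sum_eq_zero fun i _ => ?_
  rcases h i with h | h <;> simp [h]

lemma sform_wvec_wvec (n : ℕ) {a : ℕ} (ha : 1 ≤ a) (ha' : a ≤ 2 * n) (b : ℕ) :
    sform n (wvec n a) (wvec n b) = if a + b = 2 * n + 1 then (if a ≤ n then 1 else -1) else 0 := by
  rw [sform_eq_sum_rev, Finset.sum_eq_single ⟨a - 1, by omega⟩ (fun i _ hi => by
    have : (i : ℕ) + 1 ≠ a := fun h => hi (Fin.ext (by simp only; omega))
    simp [wvec, this]) (by simp)]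
  simp only [wvec, Fin.val_rev]
  split_ifs <;> first | omega | simp

lemma mem_span_wvec_image (n : ℕ) (T : Set ℕ) (x : Wsp n) :
    x ∈ span ℂ (wvec n '' T) ↔ ∀ i : Fin (2 * n), (i : ℕ) + 1 ∉ T → x i = 0 := by
  constructor
  · intro hx
    have hle : span ℂ (wvec n '' T) ≤
        Submodule.pi {i : Fin (2 * n) | (i : ℕ) + 1 ∉ T} fun _ => (⊥ : Submodule ℂ ℂ) := by
      rw [span_le]
      rintro _ ⟨m, hm, rfl⟩ i hi
      have him : (i : ℕ) + 1 ≠ m := fun h => hi (h ▸ hm)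
      simp [wvec, him]
    simpa using hle hx
  · intro hx
    rw [pi_eq_sum_univ x]
    refine Submodule.sum_mem _ fun i _ => ?_
    by_cases hi : (i : ℕ) + 1 ∈ T
    · convert Submodule.smul_mem _ (x i) (subset_span (Set.mem_image_of_mem (wvec n) hi)) using 2
      ext j
      simp [wvec, Fin.ext_iff, eq_comm]
    · simp [hx i hi]

lemma mem_WIJ (n i j : ℕ) (x : Wsp n) :
    x ∈ WIJ n i j ↔ ∀ m : Fin (2 * n), i ≤ m → (m : ℕ) < j → x m = 0 := by
  rw [WIJ, mem_span_wvec_image]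
  refine forall_congr' fun m => ?_
  have := m.isLt
  simp only [Set.mem_ofPred_eq]
  constructor
  · exact fun h h1 h2 => h (by omega)
  · exact fun h hm => h (by omega) (by omega)

lemma pr13_apply (n k : ℕ) (x : Wsp n) (m : Fin (2 * n)) :
    pr13 n k x m = if k ≤ (m : ℕ) ∧ (m : ℕ) < 2 * n - k then 0 else x m := by
  simp only [pr13, LinearMap.coe_mk, AddHom.coe_mk]
  congr 1
  exact propext (by omega)

lemma mem_ker_pr13 (n k : ℕ) (x : Wsp n) :
    x ∈ ker (pr13 n k) ↔ ∀ m : Fin (2 * n), ((m : ℕ) < k ∨ 2 * n - k ≤ m) → x m = 0 := by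
  simp only [mem_ker, funext_iff, pr13_apply, Pi.zero_apply]
  refine forall_congr' fun m => ?_
  split_ifs with h
  · exact ⟨fun _ hm => by omega, fun _ => rfl⟩
  · exact ⟨fun hm _ => hm, fun hm => hm (by omega)⟩

lemma isProj_pr13 (n k : ℕ) : IsProj (WIJ n k (2 * n - k)) (pr13 n k) where
  map_mem x := by
    rw [mem_WIJ]
    intro m h1 h2
    rw [pr13_apply, if_pos ⟨h1, h2⟩]
  map_id x hx := by
    rw [mem_WIJ] at hx
    funext m
    rw [pr13_apply]
    split_ifs with h
    · exact (hx m h.1 h.2).symm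
    · rfl

lemma sform_eq_zero_of_mem_WIJ_of_mem_ker (n k : ℕ) {x y : Wsp n}
    (hx : x ∈ WIJ n k (2 * n - k)) (hy : y ∈ ker (pr13 n k)) : sform n x y = 0 := by
  rw [mem_WIJ] at hx
  rw [mem_ker_pr13] at hy
  refine sform_eq_zero_of_forall n fun i => ?_
  by_cases hi : k ≤ (i : ℕ) ∧ (i : ℕ) < 2 * n - k
  · exact .inl (hx i hi.1 hi.2)
  · exact .inr (hy i.rev (by simp only [Fin.val_rev]; omega))

def stdE (n k : ℕ) (i : Fin k) : Wsp n := wvec n (i + 1)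

def stdF (n k : ℕ) (i : Fin k) : Wsp n := wvec n (2 * n - i)

lemma isSymplecticFamily_std {n k : ℕ} (hkn : k ≤ n) :
    IsSymplecticFamily (sformBilin n) (stdE n k) (stdF n k) := by
  refine ⟨fun i j => ?_, fun i j => ?_, fun i j => ?_⟩ <;>
    simp only [sformBilin_apply, stdE, stdF] <;>
    rw [sform_wvec_wvec n (by omega) (by omega)]
  · rw [if_neg (by omega)]
  · rw [if_neg (by omega)]
  · simp only [Fin.ext_iff]
    split_ifs <;> first | rfl | omega

lemma span_stdE_union_stdF {n k : ℕ} (hkn : k ≤ n) :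
    span ℂ (Set.range (stdE n k) ∪ Set.range (stdF n k)) = WIJ n k (2 * n - k) := by
  rw [WIJ]
  congr 1
  ext v
  simp only [Set.mem_union, Set.mem_range, Set.mem_image, Set.mem_ofPred_eq, stdE, stdF]
  constructor
  · rintro (⟨i, rfl⟩ | ⟨i, rfl⟩)
    · exact ⟨i + 1, .inl ⟨by omega, by omega⟩, rfl⟩
    · exact ⟨2 * n - i, .inr ⟨by omega, by omega⟩, rfl⟩
  · rintro ⟨m, (⟨h1, h2⟩ | ⟨h1, h2⟩), rfl⟩
    · exact .inl ⟨⟨m - 1, by omega⟩, by simp only; congr 1; omega⟩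
    · exact .inr ⟨⟨2 * n - m, by omega⟩, by simp only; congr 1; omega⟩

lemma span_stdE_sup_ker_pr13 {n k : ℕ} (hkn : k ≤ n) :
    span ℂ (Set.range (stdE n k)) ⊔ ker (pr13 n k) = WIJ n (2 * n - k) (2 * n) := by
  have hE : span ℂ (Set.range (stdE n k)) = WIJ n k (2 * n) := by
    rw [WIJ]
    congr 1
    ext v
    simp only [Set.mem_range, Set.mem_image, Set.mem_ofPred_eq, stdE]
    constructor
    · rintro ⟨i, rfl⟩
      exact ⟨i + 1, .inl ⟨by omega, by omega⟩, rfl⟩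
    · rintro ⟨m, (⟨h1, h2⟩ | ⟨h1, h2⟩), rfl⟩
      · exact ⟨⟨m - 1, by omega⟩, by simp only; congr 1; omega⟩
      · omega
  rw [hE]
  apply le_antisymm
  · refine sup_le (fun x hx => ?_) (fun x hx => ?_)
    · rw [mem_WIJ] at hx ⊢
      exact fun m h1 h2 => hx m (by omega) h2
    · rw [mem_ker_pr13] at hx
      rw [mem_WIJ]
      exact fun m h1 _ => hx m (.inr h1)
  · intro x hx
    rw [← add_sub_cancel (pr13 n k x) x]
    refine add_mem_sup ?_ ((isProj_pr13 n k).sub_apply_mem_ker x)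
    rw [mem_WIJ] at hx ⊢
    intro m h1 h2
    rw [pr13_apply]
    split_ifs with h
    · rfl
    · exact hx m (by omega) h2

lemma forall_mem_ker_pr13_iff (n k : ℕ) (g : Wsp n ≃ₗ[ℂ] Wsp n) :
    (∀ y ∈ ker (pr13 n k), g y = y) ↔
      ∀ m, k + 1 ≤ m → m ≤ 2 * n - k → g (wvec n m) = wvec n m := by
  have hker : ker (pr13 n k) = span ℂ (wvec n '' Set.Icc (k + 1) (2 * n - k)) := by
    ext x
    rw [mem_ker_pr13, mem_span_wvec_image]
    refine forall_congr' fun m => ?_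
    simp only [Set.mem_Icc, not_and_or, not_le]
    constructor <;> intro h hm <;> exact h (by omega)
  refine ⟨fun h m h1 h2 => h _ ?_, fun h => ?_⟩
  · rw [hker]
    exact subset_span ⟨m, ⟨h1, h2⟩, rfl⟩
  · rw [hker]
    intro y hy
    exact LinearMap.eqOn_span (f := (g : Wsp n →ₗ[ℂ] Wsp n)) (g := LinearMap.id)
      (by rintro _ ⟨m, hm, rfl⟩; exact h m hm.1 hm.2) hy

theorem statement0_general (n k : ℕ) (hkn : k ≤ n)
    (U : Submodule ℂ (Wsp n)) :
    IsIsotropic n (Submodule.map (pr13 n k) U) ↔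
      ∃ g : Wsp n ≃ₗ[ℂ] Wsp n,
        (∀ x y : Wsp n, sform n (g x) (g y) = sform n x y) ∧
        (∀ m, k + 1 ≤ m → m ≤ 2*n - k → g (wvec n m) = wvec n m) ∧
        Submodule.map (g : Wsp n →ₗ[ℂ] Wsp n) (WIJ n k (2*n - k)) = WIJ n k (2*n - k) ∧
        Submodule.map (g : Wsp n →ₗ[ℂ] Wsp n) U ≤ WIJ n (2*n - k) (2*n) := by
  have key := isotropic_map_iff_exists_isometry (sformBilin_isAlt n)
    (sformBilin_separatingLeft n) (isProj_pr13 n k)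
    (fun x hx y hy => sform_eq_zero_of_mem_WIJ_of_mem_ker n k hx hy)
    (isSymplecticFamily_std hkn) (span_stdE_union_stdF hkn) U
  simp only [sformBilin_apply, span_stdE_sup_ker_pr13 hkn, forall_mem_ker_pr13_iff] at key
  exact key

theorem statement0 (n k : ℕ) (hn : 1 ≤ n) (hk1 : 1 ≤ k) (hkn : k ≤ n)
    (U : Submodule ℂ (Wsp n)) (hU : Module.finrank ℂ U = k) :
    IsIsotropic n (Submodule.map (pr13 n k) U) ↔
      ∃ g : Wsp n ≃ₗ[ℂ] Wsp n,
        (∀ x y : Wsp n, sform n (g x) (g y) = sform n x y) ∧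
        (∀ m, k + 1 ≤ m → m ≤ 2*n - k → g (wvec n m) = wvec n m) ∧
        Submodule.map (g : Wsp n →ₗ[ℂ] Wsp n) (WIJ n k (2*n - k)) = WIJ n k (2*n - k) ∧
        Submodule.map (g : Wsp n →ₗ[ℂ] Wsp n) U ≤ WIJ n (2*n - k) (2*n) :=
  statement0_general n k hkn U
end
end

section
/- Let 1 ≤ i ≤ j with i + j < 2n. Let V″ ⊆ W_{i−1,j} be a subspace of dimension i−1 (with V″ = 0 if i = 1), and let U ⊆ W_{i,j+1} be a subspace of dimension i with pr_{j+1}(V″) ⊆ U. Then w_{j+1} ∉ U, so U + ℂw_{j+1} is (i+1)-dimensional and contains V″; moreover the map sending V to its image in (U + ℂw_{j+1})/V″ is a bijection from the set {V ⊆ W : V″ ⊆ V, dim V = i, V ⊆ W_{i,j}, pr_{j+1}(V) ⊆ U} onto the set of 1-dimensional subspaces of the 2-dimensional quotient (U + ℂw_{j+1})/V″. -/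
noncomputable section

open Submodule Module

set_option synthInstance.maxHeartbeats 1000000 in
lemma finrank_map_mkQ_add {n : ℕ} (V'' S : Submodule ℂ (Wsp n)) (h : V'' ≤ S) :
    Module.finrank ℂ (Submodule.map V''.mkQ S) + Module.finrank ℂ V'' = Module.finrank ℂ S := by
  have h1 := LinearMap.finrank_range_add_finrank_ker (V''.mkQ ∘ₗ S.subtype)
  have hr : LinearMap.range (V''.mkQ ∘ₗ S.subtype) = Submodule.map V''.mkQ S := by
    rw [LinearMap.range_comp, Submodule.range_subtype]
  have hk : LinearMap.ker (V''.mkQ ∘ₗ S.subtype) = Submodule.comap S.subtype V'' := by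
    rw [LinearMap.ker_comp, Submodule.ker_mkQ]
  have e2 : Module.finrank ℂ (LinearMap.ker (V''.mkQ ∘ₗ S.subtype)) = Module.finrank ℂ V'' := by
    rw [hk]
    exact (Submodule.comapSubtypeEquivOfLe h).finrank_eq
  have e1 : Module.finrank ℂ (LinearMap.range (V''.mkQ ∘ₗ S.subtype))
      = Module.finrank ℂ (Submodule.map V''.mkQ S) := by rw [hr]
  omega

lemma WIJ_coord_eq_zero {n i j : ℕ} {x : Wsp n} (hx : x ∈ WIJ n i j)
    (m : Fin (2*n)) (h1 : i < (m:ℕ)+1) (h2 : (m:ℕ)+1 ≤ j) : x m = 0 := by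
  have hle : WIJ n i j ≤
      LinearMap.ker (LinearMap.proj (R := ℂ) (φ := fun _ : Fin (2*n) => ℂ) m) := by
    rw [WIJ, Submodule.span_le]
    rintro _ ⟨k, hk, rfl⟩
    have hk' : (m:ℕ)+1 ≠ k := by rcases hk with ⟨a,b⟩|⟨a,b⟩ <;> omega
    simp [LinearMap.mem_ker, wvec, hk']
  have := hle hx
  simpa using this

lemma prj_wvec {n j : ℕ} : prj n (j+1) (wvec n (j+1)) = 0 := by
  funext m; by_cases h : (m:ℕ) = j <;> simp [prj, wvec, h]

lemma decomp {n j : ℕ} (hj : j < 2*n) (x : Wsp n) :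
    x = prj n (j+1) x + x ⟨j, by omega⟩ • wvec n (j+1) := by
  funext m
  by_cases h : (m:ℕ) = j
  · have hm : m = ⟨j, by omega⟩ := Fin.ext h
    rw [hm]
    simp [prj, wvec]
  · simp [prj, wvec, h]

lemma prj_eq_self_of_mem {n i j : ℕ} {x : Wsp n}
    (hx : x ∈ WIJ n i (j+1)) (hij : i ≤ j) : prj n (j+1) x = x := by
  funext m
  by_cases h : (m:ℕ) = j
  · have : x m = 0 := WIJ_coord_eq_zero hx m (by omega) (by omega)
    simp [prj, h, this]
  · simp [prj, h]

lemma mem_sup_of_prj {n j : ℕ} (hj : j < 2*n) {U : Submodule ℂ (Wsp n)} {x : Wsp n}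
    (hx : prj n (j+1) x ∈ U) : x ∈ U ⊔ Submodule.span ℂ {wvec n (j+1)} := by
  rw [decomp hj x]
  exact Submodule.add_mem_sup hx
    (Submodule.smul_mem _ _ (Submodule.mem_span_singleton_self _))

lemma WIJ_mono_j {n i j : ℕ} : WIJ n i (j+1) ≤ WIJ n i j := by
  apply Submodule.span_mono
  apply Set.image_mono
  intro k hk
  rcases hk with h | h
  · exact Or.inl h
  · exact Or.inr ⟨by omega, h.2⟩

theorem statement3 (n i j : ℕ) (hn : 1 ≤ n) (hi : 1 ≤ i) (hij : i ≤ j)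
    (hsum : i + j < 2*n)
    (V'' : Submodule ℂ (Wsp n)) (hV''sub : V'' ≤ WIJ n (i - 1) j)
    (hV''dim : Module.finrank ℂ V'' = i - 1)
    (U : Submodule ℂ (Wsp n)) (hUsub : U ≤ WIJ n i (j + 1))
    (hUdim : Module.finrank ℂ U = i)
    (hUpr : Submodule.map (prj n (j + 1)) V'' ≤ U) :
    wvec n (j + 1) ∉ U ∧
    Module.finrank ℂ (U ⊔ Submodule.span ℂ {wvec n (j + 1)} : Submodule ℂ (Wsp n)) = i + 1 ∧
    V'' ≤ U ⊔ Submodule.span ℂ {wvec n (j + 1)} ∧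
    Module.finrank ℂ
      (Submodule.map V''.mkQ (U ⊔ Submodule.span ℂ {wvec n (j + 1)})) = 2 ∧
    Set.BijOn (fun V : Submodule ℂ (Wsp n) => Submodule.map V''.mkQ V)
      {V | V'' ≤ V ∧ Module.finrank ℂ V = i ∧ V ≤ WIJ n i j ∧
        Submodule.map (prj n (j + 1)) V ≤ U}
      {L | L ≤ Submodule.map V''.mkQ (U ⊔ Submodule.span ℂ {wvec n (j + 1)}) ∧
        Module.finrank ℂ L = 1} := by
  have hjlt : j < 2*n := by omega
  set w : Wsp n := wvec n (j+1) with hw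
  set Sp : Submodule ℂ (Wsp n) := Submodule.span ℂ {w} with hSp
  set T : Submodule ℂ (Wsp n) := U ⊔ Sp with hT
  have hw0 : w ≠ 0 := by
    intro h
    have := congrFun h ⟨j, by omega⟩
    simp [hw, wvec] at this
  have hwU : w ∉ U := by
    intro h
    have h2 := WIJ_coord_eq_zero (hUsub h) ⟨j, by omega⟩ (show i < j + 1 by omega)
      (show j + 1 ≤ j + 1 by omega)
    simp [hw, wvec] at h2
  -- U ⊓ Sp = ⊥
  have hinf : U ⊓ Sp = ⊥ := by
    rw [eq_bot_iff]
    rintro x ⟨hxU, hxS⟩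
    rcases Submodule.mem_span_singleton.mp hxS with ⟨c, rfl⟩
    rcases eq_or_ne c 0 with rfl | hc
    · simp
    · exact absurd (by simpa [hc] using U.smul_mem c⁻¹ hxU) hwU
  have hdimT : Module.finrank ℂ T = i + 1 := by
    have h1 := Submodule.finrank_sup_add_finrank_inf_eq U Sp
    rw [hinf, finrank_bot, hUdim, finrank_span_singleton hw0] at h1
    rw [hT]
    omega
  have hV''T : V'' ≤ T := by
    intro v hv
    exact mem_sup_of_prj hjlt (hUpr (Submodule.mem_map_of_mem hv))
  have hdimQ := finrank_map_mkQ_add V'' T hV''T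
  rw [hdimT, hV''dim] at hdimQ
  have hsubT : ∀ V : Submodule ℂ (Wsp n),
      Submodule.map (prj n (j+1)) V ≤ U → V ≤ T := by
    intro V h v hv
    exact mem_sup_of_prj hjlt (h (Submodule.mem_map_of_mem hv))
  have hTsub : T ≤ WIJ n i j := by
    apply sup_le (hUsub.trans WIJ_mono_j)
    rw [hSp, Submodule.span_le, Set.singleton_subset_iff]
    exact Submodule.subset_span ⟨j+1, Or.inr ⟨le_rfl, by omega⟩, rfl⟩
  have hprjT : Submodule.map (prj n (j+1)) T ≤ U := by
    rw [hT, Submodule.map_sup]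
    apply sup_le
    · rintro _ ⟨u, hu, rfl⟩
      rwa [prj_eq_self_of_mem (hUsub hu) hij]
    · rw [hSp, Submodule.map_span, Set.image_singleton, hw, prj_wvec,
        Submodule.span_zero_singleton]
      exact bot_le
  refine ⟨hwU, hdimT, hV''T, by omega, ?_, ?_, ?_⟩
  · -- MapsTo
    rintro V ⟨hV''V, hVdim, hVW, hVpr⟩
    constructor
    · exact Submodule.map_mono (hsubT V hVpr)
    · have := finrank_map_mkQ_add V'' V hV''V
      rw [hVdim, hV''dim] at this
      show Module.finrank ℂ (Submodule.map V''.mkQ V) = 1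
      omega
  · -- InjOn
    rintro V₁ ⟨h1, _, _, _⟩ V₂ ⟨h2, _, _, _⟩ heq
    have e1 : V'' ⊔ V₁ = V'' ⊔ V₂ := by
      rw [← Submodule.comap_map_mkQ, ← Submodule.comap_map_mkQ (p := V'') (p' := V₂)]
      exact congrArg _ heq
    rwa [sup_eq_right.mpr h1, sup_eq_right.mpr h2] at e1
  · -- SurjOn
    rintro L ⟨hLle, hLdim⟩
    set V : Submodule ℂ (Wsp n) := Submodule.comap V''.mkQ L with hVdef
    have hmap : Submodule.map V''.mkQ V = L := by
      rw [hVdef, Submodule.map_comap_eq, Submodule.range_mkQ, top_inf_eq]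
    have ha : V'' ≤ V := by
      intro x hx
      have hx0 : V''.mkQ x = 0 := by
        simpa [Submodule.Quotient.mk_eq_zero] using hx
      show V''.mkQ x ∈ L
      rw [hx0]
      exact L.zero_mem
    have hVT : V ≤ T := by
      have : Submodule.comap V''.mkQ L ≤ Submodule.comap V''.mkQ (Submodule.map V''.mkQ T) := Submodule.comap_mono hLle
      rw [Submodule.comap_map_mkQ, sup_eq_right.mpr hV''T] at this
      exact le_trans (le_of_eq rfl) this
    have hdim : Module.finrank ℂ V = i := by
      have h1 := finrank_map_mkQ_add V'' V ha
      rw [hmap, hLdim, hV''dim] at h1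
      omega
    exact ⟨V, ⟨ha, hdim, hVT.trans hTsub, (Submodule.map_mono hVT).trans hprjT⟩, hmap⟩
end
end

section
/- Let (V_{i,j}) be a point of SpR_{2n}. Then the following are equivalent: (a) for every index pair (i,j) (1 ≤ i ≤ j, i+j ≤ 2n), the collection does not lie in Z_{i,j}, i.e. V_{i,j} ≠ V_{i−1,j+1} + ℂw_{j+1}; (b) for every index pair (i,j), V_{i,j} ∩ span(w_{j+1},…,w_{2n}) = 0 (equivalently, the Plücker coordinate p_{1,…,i} of V_{i,j} is nonzero). -/
noncomputable section

/-! A point of `Z_{i,j}` has `w_{j+1} ∈ V_{i,j} ∩ span(w_{j+1},…,w_{2n})`, which gives (b) ⇒ (a).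

For (a) ⇒ (b) we argue by induction on `i` and downward induction on `j`. If `V_{i,j}` meets
`span(w_{j+1},…,w_{2n})` nontrivially, the intersection is the line `ℂw_{j+1}`: for `i + j < 2n`
because `pr_{j+1}` maps it into `V_{i,j+1} ∩ span(w_{j+2},…,w_{2n}) = 0`, and for `i + j = 2n`
because by induction `V_{i-1,j} ⊆ V_{i,j}` maps onto the first `i - 1` coordinates, so isotropy of
`V_{i,j}` kills the last `i - 1` coordinates. Once `w_{j+1} ∈ V_{i,j}`, a dimension count gives
`V_{i,j} = V_{i-1,j} ⊕ ℂw_{j+1} = V_{i-1,j+1} + ℂw_{j+1}`, so the point lies in `Z_{i,j}`. -/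

open Module Submodule

lemma mem_WIJ_iff {n a b : ℕ} {x : Wsp n} :
    x ∈ WIJ n a b ↔ ∀ m : Fin (2*n), a ≤ (m : ℕ) → (m : ℕ) < b → x m = 0 := by
  constructor
  · intro hx
    induction hx using Submodule.span_induction with
    | mem y hy =>
      obtain ⟨k, hk, rfl⟩ := hy
      intro m h1 h2
      simp only [Set.mem_ofPred_eq] at hk
      simp only [wvec]
      rw [if_neg (by omega)]
    | zero => intro m _ _; rfl
    | add y z _ _ hy hz => intro m h1 h2; simp [hy m h1 h2, hz m h1 h2]
    | smul c y _ hy => intro m h1 h2; simp [hy m h1 h2]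
  · intro h
    rw [pi_eq_sum_univ x]
    refine Submodule.sum_mem _ fun m _ => ?_
    by_cases hm : a ≤ (m : ℕ) ∧ (m : ℕ) < b
    · simp [h m hm.1 hm.2]
    · have hw : (fun r => if m = r then (1 : ℂ) else 0) = wvec n (m + 1) := by
        ext r
        simp [wvec, Fin.ext_iff, eq_comm]
      rw [hw]
      exact smul_mem _ _ (subset_span ⟨m + 1, by simp only [Set.mem_ofPred_eq]; omega, rfl⟩)

lemma WIJ_inf_WIJ_zero_le (n k j : ℕ) : WIJ n k j ⊓ WIJ n 0 k ≤ WIJ n 0 j := by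
  rintro x ⟨hxk, hx0⟩
  refine mem_WIJ_iff.mpr fun m _ hm => ?_
  by_cases hmk : (m : ℕ) < k
  · exact mem_WIJ_iff.mp hx0 m (Nat.zero_le _) hmk
  · exact mem_WIJ_iff.mp hxk m (by omega) hm

lemma wvec_succ_mem_WIJ_zero (n j : ℕ) : wvec n (j+1) ∈ WIJ n 0 j :=
  mem_WIJ_iff.mpr fun m _ hm => if_neg (by omega)

lemma wvec_succ_ne_zero {n j : ℕ} (hj : j < 2*n) : wvec n (j+1) ≠ 0 := fun h => by
  simpa [wvec] using congrFun h ⟨j, hj⟩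

lemma finrank_span_wvec_succ {n j : ℕ} (hj : j < 2*n) : finrank ℂ (ℂ ∙ wvec n (j+1)) = 1 :=
  finrank_span_singleton (wvec_succ_ne_zero hj)

lemma mem_span_wvec_succ_of_apply_eq_zero {n j : ℕ} (hj : j < 2*n) {x : Wsp n}
    (hx : ∀ m : Fin (2*n), (m : ℕ) ≠ j → x m = 0) : x ∈ ℂ ∙ wvec n (j+1) := by
  refine mem_span_singleton.mpr ⟨x ⟨j, hj⟩, funext fun m => ?_⟩
  by_cases hm : (m : ℕ) = j
  · obtain rfl : m = ⟨j, hj⟩ := Fin.ext hm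
    simp [wvec]
  · simp [wvec, hm, hx m hm]

lemma prj_succ_add_smul_wvec {n j : ℕ} (hj : j < 2*n) (x : Wsp n) :
    prj n (j+1) x + x ⟨j, hj⟩ • wvec n (j+1) = x := by
  funext m
  by_cases hm : (m : ℕ) = j
  · obtain rfl : m = ⟨j, hj⟩ := Fin.ext hm
    simp [prj, wvec]
  · simp [prj, wvec, hm]

lemma prj_succ_mem_WIJ_zero {n j : ℕ} {x : Wsp n} (hx : x ∈ WIJ n 0 j) :
    prj n (j+1) x ∈ WIJ n 0 (j+1) := by
  rw [mem_WIJ_iff] at *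
  intro m _ hm
  by_cases hmj : (m : ℕ) = j
  · simp [prj, hmj]
  · simpa [prj, hmj] using hx m (Nat.zero_le _) (by omega)

lemma le_sup_span_wvec_of_map_prj_le {n j : ℕ} (hj : j < 2*n) {M N : Submodule ℂ (Wsp n)}
    (h : M.map (prj n (j+1)) ≤ N) : M ≤ N ⊔ ℂ ∙ wvec n (j+1) := fun x hx => by
  rw [← prj_succ_add_smul_wvec hj x]
  exact add_mem (mem_sup_left (h ⟨x, hx, rfl⟩))
    (mem_sup_right (smul_mem _ _ (mem_span_singleton_self _)))

lemma exists_mem_eqOn_lt {n k : ℕ} {U : Submodule ℂ (Wsp n)} (hU : finrank ℂ U = k)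
    (hdisj : U ⊓ WIJ n 0 k = ⊥) (g : Wsp n) :
    ∃ v ∈ U, ∀ r : Fin (2*n), (r : ℕ) < k → v r = g r := by
  have hk : k ≤ 2*n := by simpa [hU] using U.finrank_le
  set L := (LinearMap.funLeft ℂ ℂ (Fin.castLE hk)).domRestrict U
  have hker : LinearMap.ker (LinearMap.funLeft ℂ ℂ (Fin.castLE hk)) ≤ WIJ n 0 k :=
    fun x hx => mem_WIJ_iff.mpr fun m _ hm => congrFun hx ⟨m, hm⟩
  have hinj : Function.Injective L :=
    LinearMap.injective_domRestrict_iff.mpr ((disjoint_iff.mpr hdisj).mono_right hker)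
  have hsurj : Function.Surjective L :=
    (LinearMap.injective_iff_surjective_of_finrank_eq_finrank (by simp [hU])).mp hinj
  obtain ⟨v, hv⟩ := hsurj (g ∘ Fin.castLE hk)
  exact ⟨v, v.2, fun r hr => congrFun hv ⟨r, hr⟩⟩

-- The coordinates of `x` beyond `j` are the symplectic partners of the first `k` coordinates.
lemma apply_eq_zero_of_sform_eq_zero {n k j : ℕ} (hkj : k < j) (hsum : k + 1 + j = 2*n)
    {U : Submodule ℂ (Wsp n)} (hUW : U ≤ WIJ n k j)
    (hU : ∀ g : Wsp n, ∃ v ∈ U, ∀ r : Fin (2*n), (r : ℕ) < k → v r = g r)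
    {x : Wsp n} (hx : x ∈ WIJ n 0 j) (horth : ∀ v ∈ U, sform n x v = 0)
    (m : Fin (2*n)) (hm : j < m) : x m = 0 := by
  obtain ⟨v, hvU, hv⟩ := hU fun r => if (r : ℕ) = 2*n - 1 - m then 1 else 0
  have hvW := mem_WIJ_iff.mp (hUW hvU)
  have hxW := mem_WIJ_iff.mp hx
  have h := horth v hvU
  rw [sform, Finset.sum_eq_single m] at h
  · rw [hv _ (show 2*n - 1 - (m : ℕ) < k by omega), if_pos rfl, mul_one] at h
    split_ifs at h <;> simpa using h
  · intro s _ hsm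
    have hsm' : (s : ℕ) ≠ m := fun h => hsm (Fin.ext h)
    rcases lt_trichotomy (s : ℕ) j with hs | hs | hs
    · simp [hxW s (Nat.zero_le _) hs]
    · rw [hvW _ (show k ≤ 2*n - 1 - (s : ℕ) by omega) (show 2*n - 1 - (s : ℕ) < j by omega),
        mul_zero]
    · rw [hv _ (show 2*n - 1 - (s : ℕ) < k by omega),
        if_neg (show 2*n - 1 - (s : ℕ) ≠ 2*n - 1 - m by omega), mul_zero]
  · simp

section

variable {n : ℕ} {V : ℕ → ℕ → Submodule ℂ (Wsp n)}

lemma IsSpR.pred_le (hV : IsSpR n V) {i j : ℕ} (hi : 2 ≤ i) (hij : i ≤ j) (h : i + j ≤ 2*n) :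
    V (i-1) j ≤ V i j := by
  obtain ⟨k, rfl⟩ : ∃ k, i = k + 1 := ⟨i - 1, by omega⟩
  exact hV.mono k j (by omega) hij h

lemma IsSpR.inf_WIJ_le_span_wvec_of_succ (hV : IsSpR n V) {i j : ℕ} (h1 : 1 ≤ i) (h2 : i ≤ j)
    (h3 : i + (j+1) ≤ 2*n) (hnext : V i (j+1) ⊓ WIJ n 0 (j+1) = ⊥) :
    V i j ⊓ WIJ n 0 j ≤ ℂ ∙ wvec n (j+1) := by
  rintro x ⟨hxV, hxW⟩
  have hprj : prj n (j+1) x = 0 :=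
    (mem_bot ℂ).mp (hnext ▸ ⟨hV.proj i j h1 h2 h3 ⟨x, hxV, rfl⟩, prj_succ_mem_WIJ_zero hxW⟩)
  refine mem_span_wvec_succ_of_apply_eq_zero (by omega) fun m hm => ?_
  simpa [prj, hm] using congrFun hprj m

lemma IsSpR.inf_WIJ_le_span_wvec_of_add_eq (hV : IsSpR n V) {i j : ℕ} (h1 : 1 ≤ i) (h2 : i ≤ j)
    (hij : i + j = 2*n) (hprev : 2 ≤ i → V (i-1) j ⊓ WIJ n 0 j = ⊥) :
    V i j ⊓ WIJ n 0 j ≤ ℂ ∙ wvec n (j+1) := by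
  rintro x ⟨hxV, hxW⟩
  refine mem_span_wvec_succ_of_apply_eq_zero (by omega) fun m hm => ?_
  rcases Nat.lt_or_gt_of_ne hm with hm | hm
  · exact mem_WIJ_iff.mp hxW m (Nat.zero_le _) hm
  have hi : 2 ≤ i := by omega
  have hsub := hV.sub (i-1) j (by omega) (by omega) (by omega)
  have hdisj : V (i-1) j ⊓ WIJ n 0 (i-1) = ⊥ := eq_bot_iff.mpr fun v ⟨hvV, hv0⟩ =>
    hprev hi ▸ ⟨hvV, WIJ_inf_WIJ_zero_le n (i-1) j ⟨hsub hvV, hv0⟩⟩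
  have hiso := hV.isot i h1 (by omega)
  rw [show 2*n - i = j by omega] at hiso
  exact apply_eq_zero_of_sform_eq_zero (by omega) (by omega) hsub
    (exists_mem_eqOn_lt (hV.dim (i-1) j (by omega) (by omega) (by omega)) hdisj) hxW
    (fun v hv => hiso x hxV v (hV.pred_le hi h2 (by omega) hv)) m hm

lemma IsSpR.inZ_of_span_wvec_le (hV : IsSpR n V) {i j : ℕ} (h1 : 1 ≤ i) (h2 : i ≤ j)
    (h3 : i + j ≤ 2*n) (hw : ℂ ∙ wvec n (j+1) ≤ V i j)
    (hprev : 2 ≤ i → V (i-1) j ⊓ WIJ n 0 j = ⊥) : InZ n V i j := by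
  have hj : j < 2*n := by omega
  have hline := finrank_span_wvec_succ hj
  rw [InZ]
  split_ifs with hi
  · subst hi
    rw [bot_sup_eq]
    exact (eq_of_le_of_finrank_le hw (by rw [hV.dim 1 j h1 h2 h3, hline])).symm
  have hi2 : 2 ≤ i := by omega
  have hdisj : V (i-1) j ⊓ (ℂ ∙ wvec n (j+1)) = ⊥ := eq_bot_iff.mpr <|
    (inf_le_inf_left _ ((span_singleton_le_iff_mem _ _).mpr (wvec_succ_mem_WIJ_zero n j))).trans
      (hprev hi2).le
  have hsplit : V (i-1) j ⊔ (ℂ ∙ wvec n (j+1)) = V i j := by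
    refine eq_of_le_of_finrank_le (sup_le (hV.pred_le hi2 h2 h3) hw) ?_
    have := finrank_sup_add_finrank_inf_eq (V (i-1) j) (ℂ ∙ wvec n (j+1))
    rw [hdisj, finrank_bot, hV.dim (i-1) j (by omega) (by omega) (by omega), hline] at this
    rw [hV.dim i j h1 h2 h3]
    omega
  refine eq_of_le_of_finrank_le ?_ ?_
  · rw [← hsplit]
    exact sup_le (le_sup_span_wvec_of_map_prj_le hj (hV.proj (i-1) j (by omega) (by omega) (by omega)))
      le_sup_right
  · calc finrank ℂ ↥(V (i-1) (j+1) ⊔ ℂ ∙ wvec n (j+1))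
        ≤ finrank ℂ (V (i-1) (j+1)) + finrank ℂ (ℂ ∙ wvec n (j+1)) :=
          finrank_add_le_finrank_add_finrank _ _
      _ = finrank ℂ (V i j) := by
          rw [hV.dim (i-1) (j+1) (by omega) (by omega) (by omega), hline, hV.dim i j h1 h2 h3]
          omega

lemma IsSpR.inf_WIJ_eq_bot_of_not_inZ (hV : IsSpR n V) {i j : ℕ} (h1 : 1 ≤ i) (h2 : i ≤ j)
    (h3 : i + j ≤ 2*n) (hZ : ¬ InZ n V i j) (hprev : 2 ≤ i → V (i-1) j ⊓ WIJ n 0 j = ⊥)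
    (hnext : i + (j+1) ≤ 2*n → V i (j+1) ⊓ WIJ n 0 (j+1) = ⊥) :
    V i j ⊓ WIJ n 0 j = ⊥ := by
  have hle : V i j ⊓ WIJ n 0 j ≤ ℂ ∙ wvec n (j+1) := by
    by_cases hj : i + (j+1) ≤ 2*n
    · exact hV.inf_WIJ_le_span_wvec_of_succ h1 h2 hj (hnext hj)
    · exact hV.inf_WIJ_le_span_wvec_of_add_eq h1 h2 (by omega) hprev
  by_contra hne
  have hline : V i j ⊓ WIJ n 0 j = ℂ ∙ wvec n (j+1) := by
    refine eq_of_le_of_finrank_le hle ?_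
    rw [finrank_span_wvec_succ (by omega)]
    exact Nat.one_le_iff_ne_zero.mpr (mt finrank_eq_zero.mp hne)
  exact hZ (hV.inZ_of_span_wvec_le h1 h2 h3 (hline ▸ inf_le_left) hprev)

lemma IsSpR.inf_WIJ_eq_bot_of_forall_not_inZ (hV : IsSpR n V)
    (hZ : ∀ i j, 1 ≤ i → i ≤ j → i + j ≤ 2*n → ¬ InZ n V i j)
    (i j : ℕ) (h1 : 1 ≤ i) (h2 : i ≤ j) (h3 : i + j ≤ 2*n) : V i j ⊓ WIJ n 0 j = ⊥ :=
  hV.inf_WIJ_eq_bot_of_not_inZ h1 h2 h3 (hZ i j h1 h2 h3)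
    (fun _ => hV.inf_WIJ_eq_bot_of_forall_not_inZ hZ (i-1) j (by omega) (by omega) (by omega))
    (fun hj => hV.inf_WIJ_eq_bot_of_forall_not_inZ hZ i (j+1) h1 (by omega) hj)
termination_by (i, 2*n - j)
decreasing_by
  · exact Prod.Lex.left _ _ (by omega)
  · exact Prod.Lex.right _ (by omega)

lemma not_inZ_of_inf_WIJ_eq_bot {i j : ℕ} (hj : j < 2*n) (h : V i j ⊓ WIJ n 0 j = ⊥) :
    ¬ InZ n V i j := fun hZ => by
  have hw : wvec n (j+1) ∈ V i j ⊓ WIJ n 0 j :=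
    ⟨hZ ▸ mem_sup_right (mem_span_singleton_self _), wvec_succ_mem_WIJ_zero n j⟩
  exact wvec_succ_ne_zero hj ((mem_bot ℂ).mp (h ▸ hw))

end

theorem statement4_general (n : ℕ)
    (V : ℕ → ℕ → Submodule ℂ (Wsp n)) (hV : IsSpR n V) :
    (∀ i j, 1 ≤ i → i ≤ j → i + j ≤ 2*n → ¬ InZ n V i j) ↔
    (∀ i j, 1 ≤ i → i ≤ j → i + j ≤ 2*n → V i j ⊓ WIJ n 0 j = ⊥) :=
  ⟨hV.inf_WIJ_eq_bot_of_forall_not_inZ,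
    fun h i j h1 h2 h3 => not_inZ_of_inf_WIJ_eq_bot (by omega) (h i j h1 h2 h3)⟩

theorem statement4 (n : ℕ) (hn : 1 ≤ n)
    (V : ℕ → ℕ → Submodule ℂ (Wsp n)) (hV : IsSpR n V) :
    (∀ i j, 1 ≤ i → i ≤ j → i + j ≤ 2*n → ¬ InZ n V i j) ↔
    (∀ i j, 1 ≤ i → i ≤ j → i + j ≤ 2*n → V i j ⊓ WIJ n 0 j = ⊥) :=
  statement4_general n V hV
end
end

section
/- Let (V_1,…,V_n) be subspaces of W such that dim V_i = i for all i, pr_{i+1}(V_i) ⊆ V_{i+1} for 1 ≤ i ≤ n−1, and for each 1 ≤ i ≤ n the subspace (pr_{i+1} ∘ pr_{i+2} ∘ ⋯ ∘ pr_{2n−i})(V_i) is isotropic (for i = n this composite is empty, so the condition reads: V_n is Lagrangian). Then there exists a point (V_{i,j}) of SpR_{2n} with V_{i,i} = V_i for all 1 ≤ i ≤ n. In other words, the forgetful map from SpR_{2n} to the explicitly described degenerate symplectic flag variety, sending (V_{i,j}) to its diagonal entries (V_{1,1},…,V_{n,n}), is surjective. -/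
noncomputable section

/-- The composite projection `pr_a ∘ pr_{a+1} ∘ ⋯ ∘ pr_b` (identity if `b < a`). -/
def prChain (n a b : ℕ) : Wsp n →ₗ[ℂ] Wsp n :=
  (((List.range' a (b + 1 - a)).map (prj n)).foldr (fun f g => f ∘ₗ g) LinearMap.id)

/-! ### Auxiliary lemmas -/

lemma sform_add_swap (n : ℕ) (x y : Wsp n) : sform n x y + sform n y x = 0 := by
  have h : sform n y x = ∑ i : Fin (2*n), (if (i : ℕ) < n then -1 else 1) * x i *
      y ⟨2*n - 1 - (i : ℕ), by have := i.isLt; omega⟩ := by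
    rw [sform]
    apply Fintype.sum_bijective Fin.rev Fin.rev_bijective
    intro i
    have hrev : ((i.rev : ℕ)) = 2*n - 1 - (i : ℕ) := by
      have := i.isLt; simp [Fin.rev]; omega
    have h2 : (⟨2*n - 1 - ((i.rev : ℕ)), by have := i.isLt; omega⟩ : Fin (2*n)) = i := by
      apply Fin.ext; simp only [hrev]; have := i.isLt; omega
    have h3 : (⟨2*n - 1 - (i : ℕ), by have := i.isLt; omega⟩ : Fin (2*n)) = i.rev := by
      apply Fin.ext; simp only [hrev]
    have h4 : ((i.rev : ℕ) < n) ↔ ¬ ((i : ℕ) < n) := by have := i.isLt; omega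
    rw [h2, h3]
    split_ifs with hA hB hB
    · exfalso; omega
    · ring
    · ring
    · exfalso; omega
  rw [h, sform, ← Finset.sum_add_distrib]
  apply Finset.sum_eq_zero
  intro i _
  split_ifs <;> ring

lemma sform_self (n : ℕ) (x : Wsp n) : sform n x x = 0 := by
  have h := sform_add_swap n x x
  have h2 : (2 : ℂ) * sform n x x = 0 := by linear_combination h
  rcases mul_eq_zero.mp h2 with h3 | h3
  · norm_num at h3
  · exact h3

lemma sform_neg_swap (n : ℕ) (x y : Wsp n) : sform n x y = - sform n y x := by
  linear_combination sform_add_swap n x y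

/-- `sform` as a bilinear map. -/
noncomputable def sformL (n : ℕ) : Wsp n →ₗ[ℂ] Wsp n →ₗ[ℂ] ℂ :=
  LinearMap.mk₂ ℂ (sform n)
    (by intro x x' y; rw [sform, sform, sform, ← Finset.sum_add_distrib]
        apply Finset.sum_congr rfl; intro i _; simp only [Pi.add_apply]
        split_ifs <;> ring)
    (by intro c x y
        rw [sform, sform, smul_eq_mul, Finset.mul_sum]
        apply Finset.sum_congr rfl; intro i _; simp only [Pi.smul_apply, smul_eq_mul]
        split_ifs <;> ring)
    (by intro x y y'; rw [sform, sform, sform, ← Finset.sum_add_distrib]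
        apply Finset.sum_congr rfl; intro i _; simp only [Pi.add_apply]
        split_ifs <;> ring)
    (by intro c x y
        rw [sform, sform, smul_eq_mul, Finset.mul_sum]
        apply Finset.sum_congr rfl; intro i _; simp only [Pi.smul_apply, smul_eq_mul]
        split_ifs <;> ring)

@[simp] lemma sformL_apply (n : ℕ) (x y : Wsp n) : sformL n x y = sform n x y := rfl

lemma prj_apply' (n k : ℕ) (x : Wsp n) (m : Fin (2*n)) :
    prj n k x m = if (m : ℕ) + 1 = k then 0 else x m := rfl

/-- Preservation of the form under `pr_k` when the mirror coordinate vanishes. -/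
lemma sform_prj (n k : ℕ) (hk : 1 ≤ k) (hk2 : k ≤ 2*n) (x y : Wsp n)
    (hx : x ⟨2*n - k, by omega⟩ = 0) (hy : y ⟨2*n - k, by omega⟩ = 0) :
    sform n (prj n k x) (prj n k y) = sform n x y := by
  rw [sform, sform]
  apply Finset.sum_congr rfl
  intro m _
  have hmlt := m.isLt
  simp only [prj_apply', Fin.val_mk]
  by_cases h1 : (m : ℕ) + 1 = k
  · have hy0 : y ⟨2*n - 1 - (m : ℕ), by omega⟩ = 0 := by
      have he : (⟨2*n - 1 - (m : ℕ), by omega⟩ : Fin (2*n)) = ⟨2*n - k, by omega⟩ := by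
        apply Fin.ext; simp only [Fin.val_mk]; omega
      rw [he]; exact hy
    rw [if_pos h1, hy0]
    split_ifs <;> ring
  · rw [if_neg h1]
    by_cases h3 : 2*n - 1 - (m : ℕ) + 1 = k
    · have hx0 : x m = 0 := by
        have he : m = (⟨2*n - k, by omega⟩ : Fin (2*n)) := by
          apply Fin.ext; simp only [Fin.val_mk]; omega
        rw [he]; exact hx
      rw [if_pos h3, hx0]
      ring
    · rw [if_neg h3]
/-- The coordinate-vanishing description of `W_{i,j}`. -/
noncomputable def Zsub (n i j : ℕ) : Submodule ℂ (Wsp n) where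
  carrier := {x | ∀ m : Fin (2*n), i ≤ (m : ℕ) → (m : ℕ) + 1 ≤ j → x m = 0}
  zero_mem' := by intro m _ _; rfl
  add_mem' := by intro a b ha hb m h1 h2; simp [ha m h1 h2, hb m h1 h2]
  smul_mem' := by intro c a ha m h1 h2; simp [ha m h1 h2]

lemma mem_Zsub (n i j : ℕ) (x : Wsp n) :
    x ∈ Zsub n i j ↔ ∀ m : Fin (2*n), i ≤ (m : ℕ) → (m : ℕ) + 1 ≤ j → x m = 0 :=
  Iff.rfl

lemma wvec_eq_single (n : ℕ) (m : Fin (2*n)) : wvec n ((m : ℕ) + 1) = Pi.single m 1 := by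
  funext i
  rw [wvec, Pi.single_apply]
  by_cases h : i = m
  · rw [if_pos (by rw [h]), if_pos h]
  · rw [if_neg (fun hc => h (Fin.ext (by omega))), if_neg h]

lemma WIJ_eq_Zsub (n i j : ℕ) : WIJ n i j = Zsub n i j := by
  apply le_antisymm
  · rw [WIJ, Submodule.span_le]
    rintro _ ⟨k, hk, rfl⟩
    intro m h1 h2
    have hne : (m : ℕ) + 1 ≠ k := by
      rcases hk with ⟨hk1, hk2⟩ | ⟨hk1, hk2⟩ <;> omega
    show (if (m : ℕ) + 1 = k then (1:ℂ) else 0) = 0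
    exact if_neg hne
  · intro x hx
    rw [mem_Zsub] at hx
    have hrep : x = ∑ m : Fin (2*n), Pi.single m (x m) := (Finset.univ_sum_single x).symm
    rw [hrep]
    apply Submodule.sum_mem
    intro m _
    by_cases hm : i ≤ (m : ℕ) ∧ (m : ℕ) + 1 ≤ j
    · rw [hx m hm.1 hm.2]
      simp
    · have hsingle : Pi.single m (x m) = x m • wvec n ((m : ℕ) + 1) := by
        rw [wvec_eq_single]
        funext i
        rw [Pi.smul_apply, Pi.single_apply, Pi.single_apply]
        split_ifs <;> simp
      rw [hsingle]
      apply Submodule.smul_mem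
      apply Submodule.subset_span
      refine ⟨(m : ℕ) + 1, ?_, rfl⟩
      show (1 ≤ (m : ℕ) + 1 ∧ (m : ℕ) + 1 ≤ i) ∨ (j + 1 ≤ (m : ℕ) + 1 ∧ (m : ℕ) + 1 ≤ 2*n)
      have := m.isLt
      omega

lemma prChain_foldr_apply (n : ℕ) (L : ℕ) (a : ℕ) (x : Wsp n) (k : Fin (2*n)) :
    (((List.range' a L).map (prj n)).foldr (fun f g => f ∘ₗ g) LinearMap.id) x k =
      if a ≤ (k : ℕ) + 1 ∧ (k : ℕ) + 1 < a + L then 0 else x k := by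
  induction L generalizing a x with
  | zero =>
    simp only [List.range', List.map_nil, List.foldr_nil, LinearMap.id_coe, id_eq]
    exact (if_neg (by omega)).symm
  | succ L ih =>
    rw [List.range'_succ]
    simp only [List.map_cons, List.foldr_cons, LinearMap.comp_apply]
    rw [prj_apply']
    by_cases h : (k : ℕ) + 1 = a
    · rw [if_pos h, if_pos (by omega)]
    · rw [if_neg h, ih]
      have : ((a + 1 ≤ (k:ℕ) + 1 ∧ (k:ℕ) + 1 < a + 1 + L)) ↔
          (a ≤ (k:ℕ) + 1 ∧ (k:ℕ) + 1 < a + (L+1)) := by omega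
      rw [if_congr this rfl rfl]

lemma prChain_apply (n a b : ℕ) (x : Wsp n) (k : Fin (2*n)) :
    prChain n a b x k = if a ≤ (k : ℕ) + 1 ∧ (k : ℕ) + 1 ≤ b then 0 else x k := by
  rw [prChain, prChain_foldr_apply]
  exact if_congr (by omega) rfl rfl

lemma prChain_id (n a b : ℕ) (h : b < a) : prChain n a b = LinearMap.id := by
  apply LinearMap.ext; intro x; funext k
  rw [prChain_apply]
  exact if_neg (by omega)

lemma prChain_single (n a : ℕ) : prChain n a a = prj n a := by
  apply LinearMap.ext; intro x; funext k
  rw [prChain_apply, prj_apply']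
  exact if_congr (by omega) rfl rfl
lemma finrank_inf_ker (n : ℕ) (A : Submodule ℂ (Wsp n)) (φ : Wsp n →ₗ[ℂ] ℂ) :
    Module.finrank ℂ A ≤ Module.finrank ℂ (A ⊓ LinearMap.ker φ : Submodule ℂ (Wsp n)) + 1 := by
  set ψ := φ.comp A.subtype with hψ
  have hmap : Submodule.map A.subtype (LinearMap.ker ψ) = A ⊓ LinearMap.ker φ := by
    ext x
    constructor
    · rintro ⟨⟨z, hz⟩, hker, rfl⟩
      exact ⟨hz, hker⟩
    · rintro ⟨hA, hk⟩
      exact ⟨⟨x, hA⟩, hk, rfl⟩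
  have h1 : Module.finrank ℂ (LinearMap.ker ψ) =
      Module.finrank ℂ (A ⊓ LinearMap.ker φ : Submodule ℂ (Wsp n)) := by
    rw [← hmap, Submodule.finrank_map_subtype_eq]
  have h2 := LinearMap.finrank_range_add_finrank_ker ψ
  have h3 : Module.finrank ℂ (LinearMap.range ψ) ≤ 1 := by
    have := Submodule.finrank_le (LinearMap.range ψ)
    simpa using this
  omega

lemma finrank_inf_sperp (n : ℕ) (Z U : Submodule ℂ (Wsp n)) :
    Module.finrank ℂ Z ≤
      Module.finrank ℂ (Z ⊓ sperp n U : Submodule ℂ (Wsp n)) + Module.finrank ℂ U := by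
  set F : Z →ₗ[ℂ] Module.Dual ℂ U :=
    (LinearMap.domRestrict' U).comp ((sformL n).comp Z.subtype) with hF
  have hmap : Submodule.map Z.subtype (LinearMap.ker F) = Z ⊓ sperp n U := by
    ext x
    constructor
    · rintro ⟨⟨z, hz⟩, hker, rfl⟩
      refine ⟨hz, ?_⟩
      intro u hu
      have := LinearMap.congr_fun hker ⟨u, hu⟩
      simpa [F] using this
    · rintro ⟨hZ, hperp⟩
      refine ⟨⟨x, hZ⟩, ?_, rfl⟩
      apply LinearMap.ext
      rintro ⟨u, hu⟩
      simpa [F] using hperp u hu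
  have h1 : Module.finrank ℂ (LinearMap.ker F) =
      Module.finrank ℂ (Z ⊓ sperp n U : Submodule ℂ (Wsp n)) := by
    rw [← hmap, Submodule.finrank_map_subtype_eq]
  have h2 := LinearMap.finrank_range_add_finrank_ker F
  have h3 : Module.finrank ℂ (LinearMap.range F) ≤ Module.finrank ℂ U := by
    have hle := Submodule.finrank_le (LinearMap.range F)
    rwa [Subspace.dual_finrank_eq] at hle
  omega

lemma finrank_sup_span_singleton (n : ℕ) (P : Submodule ℂ (Wsp n)) (x : Wsp n) (hx : x ∉ P) :
    Module.finrank ℂ (P ⊔ Submodule.span ℂ {x} : Submodule ℂ (Wsp n)) =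
      Module.finrank ℂ P + 1 := by
  have hx0 : x ≠ 0 := fun h => hx (h ▸ P.zero_mem)
  have hinf : P ⊓ Submodule.span ℂ {x} = ⊥ := by
    rw [Submodule.eq_bot_iff]
    rintro y ⟨hyP, hyS⟩
    rcases Submodule.mem_span_singleton.mp hyS with ⟨c, rfl⟩
    by_cases hc : c = 0
    · rw [hc, zero_smul]
    · exact absurd (by simpa [hc] using P.smul_mem c⁻¹ hyP) hx
  have := Submodule.finrank_sup_add_finrank_inf_eq P (Submodule.span ℂ {x})
  rw [hinf, finrank_span_singleton hx0] at this
  simpa using this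

lemma exists_finrank_between (n : ℕ) (A : Submodule ℂ (Wsp n)) (k : ℕ)
    (hk : k ≤ Module.finrank ℂ A) :
    ∀ d (P : Submodule ℂ (Wsp n)), P ≤ A → Module.finrank ℂ P ≤ k →
      k - Module.finrank ℂ P ≤ d →
      ∃ B, P ≤ B ∧ B ≤ A ∧ Module.finrank ℂ B = k := by
  intro d
  induction d with
  | zero =>
    intro P hPA hPk hd
    exact ⟨P, le_refl _, hPA, by omega⟩
  | succ d ih =>
    intro P hPA hPk hd
    by_cases heq : Module.finrank ℂ P = k
    · exact ⟨P, le_refl _, hPA, heq⟩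
    · have hlt : P < A := by
        rcases lt_or_eq_of_le hPA with h | h
        · exact h
        · exfalso; rw [h] at heq hPk; omega
      obtain ⟨x, hxA, hxP⟩ := SetLike.exists_of_lt hlt
      have hrank := finrank_sup_span_singleton n P x hxP
      have hsub : P ⊔ Submodule.span ℂ {x} ≤ A := by
        apply sup_le hPA
        rw [Submodule.span_le, Set.singleton_subset_iff]
        exact hxA
      obtain ⟨B, h1, h2, h3⟩ := ih (P ⊔ Submodule.span ℂ {x}) hsub (by omega) (by omega)
      exact ⟨B, le_trans le_sup_left h1, h2, h3⟩
lemma zsub_finrank_ge (n i : ℕ) (hi : i ≤ n) :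
    2*i ≤ Module.finrank ℂ (Zsub n i (2*n - i)) := by
  set f : Fin i ⊕ Fin i → Fin (2*n) :=
    (fun s => Sum.rec (fun t => ⟨(t : ℕ), by have := t.isLt; omega⟩)
      (fun t => ⟨2*n - i + (t : ℕ), by have := t.isLt; omega⟩) s) with hf
  have hinj : Function.Injective f := by
    rintro (s | s) (t | t) h <;>
      simp only [f, Fin.mk.injEq] at h <;>
      first
        | (apply congrArg; apply Fin.ext; have := s.isLt; have := t.isLt; omega)
        | (exfalso; have := s.isLt; have := t.isLt; omega)
  set v : Fin i ⊕ Fin i → Wsp n := fun s => (Pi.basisFun ℂ (Fin (2*n))) (f s) with hv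
  have hli : LinearIndependent ℂ v :=
    (Pi.basisFun ℂ (Fin (2*n))).linearIndependent.comp f hinj
  have hspan : Submodule.span ℂ (Set.range v) ≤ Zsub n i (2*n - i) := by
    rw [Submodule.span_le]
    rintro _ ⟨s, rfl⟩
    intro m h1 h2
    have hfs : ((f s : Fin (2*n)) : ℕ) < i ∨ 2*n - i ≤ ((f s : Fin (2*n)) : ℕ) := by
      rcases s with t | t
      · left; simpa [f] using t.isLt
      · right; simp [f]
    show (Pi.basisFun ℂ (Fin (2*n))) (f s) m = 0
    rw [Pi.basisFun_apply, Pi.single_apply]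
    apply if_neg
    intro hc
    rw [hc] at h1 h2
    omega
  have hcard := finrank_span_eq_card hli
  have hmono := Submodule.finrank_mono hspan
  rw [hcard] at hmono
  simp only [Fintype.card_sum, Fintype.card_fin] at hmono; omega

lemma isotropic_sup_span (n : ℕ) (U : Submodule ℂ (Wsp n)) (x : Wsp n)
    (hiso : IsIsotropic n U) (hx : x ∈ sperp n U) :
    IsIsotropic n (U ⊔ Submodule.span ℂ {x}) := by
  intro u hu v hv
  obtain ⟨a, ha, z, hz, rfl⟩ := Submodule.mem_sup.mp hu
  obtain ⟨b, hb, w, hw, rfl⟩ := Submodule.mem_sup.mp hv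
  obtain ⟨c, rfl⟩ := Submodule.mem_span_singleton.mp hz
  obtain ⟨d, rfl⟩ := Submodule.mem_span_singleton.mp hw
  have key : sform n (a + c • x) (b + d • x) =
      sform n a b + d * sform n a x + (c * sform n x b + c * d * sform n x x) := by
    have := map_add (sformL n) a (c • x)
    calc sform n (a + c • x) (b + d • x) = sformL n (a + c • x) (b + d • x) := rfl
      _ = _ := by
        simp only [map_add, map_smul, LinearMap.add_apply, LinearMap.smul_apply,
          smul_eq_mul, sformL_apply]
        ring
  rw [key, hiso a ha b hb, hx b hb, sform_self,
    show sform n a x = - sform n x a from sform_neg_swap n a x, hx a ha]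
  ring
lemma iso_extend (n i : ℕ) (hi : i ≤ n) :
    ∀ d (U : Submodule ℂ (Wsp n)), U ≤ Zsub n i (2*n - i) → IsIsotropic n U →
      Module.finrank ℂ U ≤ i → i - Module.finrank ℂ U ≤ d →
      ∃ L, U ≤ L ∧ L ≤ Zsub n i (2*n - i) ∧ Module.finrank ℂ L = i ∧ IsIsotropic n L := by
  intro d
  induction d with
  | zero =>
    intro U hUZ hiso hle hd
    exact ⟨U, le_refl _, hUZ, by omega, hiso⟩
  | succ d ih =>
    intro U hUZ hiso hle hd
    by_cases heq : Module.finrank ℂ U = i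
    · exact ⟨U, le_refl _, hUZ, heq, hiso⟩
    · have h2i := zsub_finrank_ge n i hi
      have hcodim := finrank_inf_sperp n (Zsub n i (2*n - i)) U
      have hUle : U ≤ Zsub n i (2*n - i) ⊓ sperp n U :=
        le_inf hUZ (fun u hu v hv => hiso u hu v hv)
      have hlt : U < Zsub n i (2*n - i) ⊓ sperp n U := by
        rcases lt_or_eq_of_le hUle with h | h
        · exact h
        · exfalso
          rw [← h] at hcodim
          omega
      obtain ⟨x, hxI, hxU⟩ := SetLike.exists_of_lt hlt
      have hrank := finrank_sup_span_singleton n U x hxU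
      have hsubZ : U ⊔ Submodule.span ℂ {x} ≤ Zsub n i (2*n - i) := by
        apply sup_le hUZ
        rw [Submodule.span_le, Set.singleton_subset_iff]
        exact hxI.1
      obtain ⟨L, hL1, hL2, hL3, hL4⟩ := ih (U ⊔ Submodule.span ℂ {x}) hsubZ
        (isotropic_sup_span n U x hiso hxI.2) (by omega) (by omega)
      exact ⟨L, le_trans le_sup_left hL1, hL2, hL3, hL4⟩

lemma inv_step (n i j' : ℕ) (hij : i + 1 ≤ j') (hj : i + j' < 2*n)
    (A B : Submodule ℂ (Wsp n))
    (hInvA : IsIsotropic n (Submodule.map (prChain n (j'+1) (2*n - (i+1))) A))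
    (hBA : B ≤ A) (hBZ : B ≤ Zsub n i j') :
    IsIsotropic n (Submodule.map (prChain n (j'+1) (2*n - i)) B) := by
  rintro _ ⟨x, hx, rfl⟩ _ ⟨y, hy, rfl⟩
  have hxcoord : x ⟨i, by omega⟩ = 0 := hBZ hx ⟨i, by omega⟩ (by simp) (by simp; omega)
  have hycoord : y ⟨i, by omega⟩ = 0 := hBZ hy ⟨i, by omega⟩ (by simp) (by simp; omega)
  set x' := prChain n (j'+1) (2*n - (i+1)) x with hx'
  set y' := prChain n (j'+1) (2*n - (i+1)) y with hy'
  have hxe : prChain n (j'+1) (2*n - i) x = prj n (2*n - i) x' := by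
    funext k
    rw [prChain_apply, prj_apply', hx', prChain_apply]
    have hk := k.isLt
    by_cases h1 : (k : ℕ) + 1 = 2*n - i
    · rw [if_pos (by omega), if_pos h1]
    · by_cases h2 : j' + 1 ≤ (k : ℕ) + 1 ∧ (k : ℕ) + 1 ≤ 2*n - (i+1)
      · rw [if_pos (by omega), if_neg h1, if_pos h2]
      · rw [if_neg (by omega), if_neg h1, if_neg h2]
  have hye : prChain n (j'+1) (2*n - i) y = prj n (2*n - i) y' := by
    funext k
    rw [prChain_apply, prj_apply', hy', prChain_apply]
    have hk := k.isLt
    by_cases h1 : (k : ℕ) + 1 = 2*n - i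
    · rw [if_pos (by omega), if_pos h1]
    · by_cases h2 : j' + 1 ≤ (k : ℕ) + 1 ∧ (k : ℕ) + 1 ≤ 2*n - (i+1)
      · rw [if_pos (by omega), if_neg h1, if_pos h2]
      · rw [if_neg (by omega), if_neg h1, if_neg h2]
  rw [hxe, hye]
  have hmirror : 2*n - (2*n - i) = i := by omega
  have hx'0 : x' ⟨2*n - (2*n - i), by omega⟩ = 0 := by
    have he : (⟨2*n - (2*n - i), by omega⟩ : Fin (2*n)) = ⟨i, by omega⟩ :=
      Fin.ext (by simp only [Fin.val_mk]; omega)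
    rw [he, hx', prChain_apply, if_neg (by simp only [Fin.val_mk]; omega)]
    exact hxcoord
  have hy'0 : y' ⟨2*n - (2*n - i), by omega⟩ = 0 := by
    have he : (⟨2*n - (2*n - i), by omega⟩ : Fin (2*n)) = ⟨i, by omega⟩ :=
      Fin.ext (by simp only [Fin.val_mk]; omega)
    rw [he, hy', prChain_apply, if_neg (by simp only [Fin.val_mk]; omega)]
    exact hycoord
  rw [sform_prj n (2*n - i) (by omega) (by omega) x' y' hx'0 hy'0]
  exact hInvA x' ⟨x, hBA hx, rfl⟩ y' ⟨y, hBA hy, rfl⟩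
/-- The invariant carried along the column-by-column construction. -/
def GoodCols (n : ℕ) (V : ℕ → Submodule ℂ (Wsp n)) (jmax : ℕ)
    (Vf : ℕ → ℕ → Submodule ℂ (Wsp n)) : Prop :=
  (∀ i j, 1 ≤ i → i ≤ j → i + j ≤ 2*n → j ≤ jmax →
     Module.finrank ℂ (Vf i j) = i ∧ Vf i j ≤ Zsub n i j ∧
     IsIsotropic n (Submodule.map (prChain n (j+1) (2*n - i)) (Vf i j)))
  ∧ (∀ i j, 1 ≤ i → i + 1 ≤ j → (i+1) + j ≤ 2*n → j ≤ jmax → Vf i j ≤ Vf (i+1) j)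
  ∧ (∀ i j, 1 ≤ i → i ≤ j → i + (j+1) ≤ 2*n → j + 1 ≤ jmax →
     Submodule.map (prj n (j+1)) (Vf i j) ≤ Vf i (j+1))
  ∧ (∀ i, 1 ≤ i → i ≤ n → i ≤ jmax → Vf i i = V i)

lemma goodcols_exists (n : ℕ) (hn : 1 ≤ n) (V : ℕ → Submodule ℂ (Wsp n))
    (hdim : ∀ i, 1 ≤ i → i ≤ n → Module.finrank ℂ (V i) = i)
    (hpr : ∀ i, 1 ≤ i → i ≤ n - 1 → Submodule.map (prj n (i + 1)) (V i) ≤ V (i + 1))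
    (hiso : ∀ i, 1 ≤ i → i ≤ n →
      IsIsotropic n (Submodule.map (prChain n (i + 1) (2*n - i)) (V i))) :
    ∀ j, 1 ≤ j → ∃ Vf, GoodCols n V j Vf := by
  intro j hj
  induction j, hj using Nat.le_induction with
  | base =>
    refine ⟨fun i _ => V i, ?_, ?_, ?_, ?_⟩
    · intro i j hi hij h2n hjm
      have hi1 : i = 1 := by omega
      have hj1 : j = 1 := by omega
      subst hi1; subst hj1
      refine ⟨hdim 1 le_rfl hn, ?_, hiso 1 le_rfl hn⟩
      intro x _ m h1 h2
      exfalso; omega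
    · intro i j hi hij h2n hjm; exfalso; omega
    · intro i j hi hij h2n hjm; exfalso; omega
    · intro i _ _ _; rfl
  | succ j hj ih =>
    obtain ⟨Vf, hg1, hg2, hg3, hg4⟩ := ih
    by_cases hbig : 2*n ≤ j + 1
    · refine ⟨Vf, ?_, ?_, ?_, ?_⟩
      · intro i j' hi hij h2n hjm
        exact hg1 i j' hi hij h2n (by omega)
      · intro i j' hi hij h2n hjm
        exact hg2 i j' hi hij h2n (by omega)
      · intro i j' hi hij h2n hjm
        exact hg3 i j' hi hij h2n (by omega)
      · intro i hi hin him
        exact hg4 i hi hin (by omega)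
    · -- the real construction of column j+1
      set itop := min (j+1) (2*n - (j+1)) with hitop
      have hit1 : itop ≤ j + 1 := min_le_left _ _
      have hit2 : itop ≤ 2*n - (j+1) := min_le_right _ _
      have hit3 : itop = j+1 ∨ itop = 2*n - (j+1) := by
        rcases le_total (j+1) (2*n - (j+1)) with h | h
        · exact Or.inl (min_eq_left h)
        · exact Or.inr (min_eq_right h)
      have hitop1 : 1 ≤ itop := by omega
      have col : ∀ t, ∃ C : ℕ → Submodule ℂ (Wsp n),
          ∀ i, 1 ≤ i → itop - t ≤ i → i ≤ itop →
            Module.finrank ℂ (C i) = i ∧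
            C i ≤ Zsub n i (j+1) ∧
            IsIsotropic n (Submodule.map (prChain n ((j+1)+1) (2*n - i)) (C i)) ∧
            (i ≤ j → Submodule.map (prj n (j+1)) (Vf i j) ≤ C i) ∧
            (i + 1 ≤ itop → C i ≤ C (i+1)) ∧
            (i = j+1 → C i = V i) := by
        intro t
        induction t with
        | zero =>
          by_cases hd : j + 1 ≤ 2*n - (j+1)
          · -- itop = j+1, diagonal top entry
            have hteq : itop = j+1 := by omega
            have hjn : j + 1 ≤ n := by omega
            refine ⟨fun _ => V (j+1), ?_⟩
            intro i hi1 hi2 hi3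
            have hieq : i = j + 1 := by omega
            subst hieq
            refine ⟨hdim (j+1) (by omega) hjn, ?_, ?_, ?_, ?_, fun _ => rfl⟩
            · intro x _ m h1 h2; exfalso; omega
            · exact hiso (j+1) (by omega) hjn
            · intro h; exfalso; omega
            · intro h; exfalso; omega
          · -- itop = 2n-(j+1) ≤ j, isotropic top entry
            have hteq : itop = 2*n - (j+1) := by omega
            set i0 := 2*n - (j+1) with hi0
            have hi01 : 1 ≤ i0 := by omega
            have hi0j : i0 ≤ j := by omega
            have h2ni0 : 2*n - i0 = j + 1 := by omega
            obtain ⟨hV1, hV2, hV3⟩ := hg1 i0 j hi01 hi0j (by omega) le_rfl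
            set P := Submodule.map (prj n (j+1)) (Vf i0 j) with hP
            have hPiso : IsIsotropic n P := by
              have h := hV3
              rw [h2ni0, prChain_single] at h
              exact h
            have hPZ : P ≤ Zsub n i0 (2*n - i0) := by
              rw [h2ni0]
              rintro _ ⟨x, hx, rfl⟩ m h1 h2
              rw [prj_apply']
              by_cases hm : (m : ℕ) + 1 = j + 1
              · rw [if_pos hm]
              · rw [if_neg hm]
                exact hV2 hx m h1 (by omega)
            have hPrank : Module.finrank ℂ P ≤ i0 := by
              have := Submodule.finrank_map_le (prj n (j+1)) (Vf i0 j)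
              rw [hV1] at this
              exact this
            obtain ⟨L, hL1, hL2, hL3, hL4⟩ :=
              iso_extend n i0 (by omega) i0 P hPZ hPiso hPrank (by omega)
            refine ⟨fun _ => L, ?_⟩
            intro i hi1 hi2 hi3
            have hieq : i = i0 := by omega
            subst hieq
            refine ⟨hL3, ?_, ?_, fun _ => hL1, ?_, ?_⟩
            · rw [← h2ni0]; exact hL2
            · rw [prChain_id n ((j+1)+1) (2*n - i0) (by omega), Submodule.map_id]
              exact hL4
            · intro h; exfalso; omega
            · intro h; exfalso; omega
        | succ t ihc =>
          obtain ⟨C, hC⟩ := ihc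
          by_cases hwork : 1 ≤ itop - (t+1) ∧ itop - (t+1) < itop - t
          · set ℓ := itop - (t+1) with hℓ
            have hℓ1 : 1 ≤ ℓ := hwork.1
            have hℓsucc : ℓ + 1 = itop - t := by omega
            have hℓtop : ℓ + 1 ≤ itop := by omega
            have hℓj : ℓ ≤ j := by omega
            have hℓ2n : ℓ + 1 ≤ 2*n - (j+1) := by omega
            obtain ⟨hA1, hA2, hA3, hA4, hA5, hA6⟩ :=
              hC (ℓ+1) (by omega) (by omega) (by omega)
            obtain ⟨hV1, hV2, hV3⟩ := hg1 ℓ j hℓ1 hℓj (by omega) le_rfl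
            set P := Submodule.map (prj n (j+1)) (Vf ℓ j) with hPdef
            have hPA : P ≤ C (ℓ+1) := by
              by_cases hcase : ℓ = j
              · have htℓ : itop = j + 1 := by omega
                have hCV : C (ℓ+1) = V (ℓ+1) := hA6 (by omega)
                have hVV : Vf ℓ j = V j := by
                  rw [hcase]; exact hg4 j (by omega) (by omega) le_rfl
                rw [hCV, hPdef, hVV, hcase]
                exact hpr j (by omega) (by omega)
              · have hmono := hg2 ℓ j hℓ1 (by omega) (by omega) le_rfl
                calc P ≤ Submodule.map (prj n (j+1)) (Vf (ℓ+1) j) :=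
                      Submodule.map_mono hmono
                  _ ≤ C (ℓ+1) := hA4 (by omega)
            have hPZ : P ≤ Zsub n ℓ (j+1) := by
              rintro _ ⟨x, hx, rfl⟩ m h1 h2
              rw [prj_apply']
              by_cases hm : (m : ℕ) + 1 = j + 1
              · rw [if_pos hm]
              · rw [if_neg hm]
                exact hV2 hx m h1 (by omega)
            have hPrank : Module.finrank ℂ P ≤ ℓ := by
              have := Submodule.finrank_map_le (prj n (j+1)) (Vf ℓ j)
              rw [hV1] at this
              exact this
            have hℓlt : ℓ < 2*n := by omega
            have hker : C (ℓ+1) ⊓ Zsub n ℓ (j+1) =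
                C (ℓ+1) ⊓ LinearMap.ker (LinearMap.proj (⟨ℓ, hℓlt⟩ : Fin (2*n))) := by
              ext x
              constructor
              · rintro ⟨hxC, hxZ⟩
                refine ⟨hxC, LinearMap.mem_ker.mpr ?_⟩
                exact hxZ ⟨ℓ, hℓlt⟩ (by simp) (by simp; omega)
              · rintro ⟨hxC, hxk⟩
                refine ⟨hxC, ?_⟩
                intro m h1 h2
                by_cases hm : (m : ℕ) = ℓ
                · have hme : m = ⟨ℓ, hℓlt⟩ := Fin.ext hm
                  rw [hme]
                  exact LinearMap.mem_ker.mp hxk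
                · exact hA2 hxC m (by omega) h2
            have hAmbrank : ℓ ≤ Module.finrank ℂ
                (C (ℓ+1) ⊓ Zsub n ℓ (j+1) : Submodule ℂ (Wsp n)) := by
              have hcd := finrank_inf_ker n (C (ℓ+1))
                (LinearMap.proj (⟨ℓ, hℓlt⟩ : Fin (2*n)))
              rw [← hker, hA1] at hcd
              omega
            obtain ⟨B, hB1, hB2, hB3⟩ :=
              exists_finrank_between n (C (ℓ+1) ⊓ Zsub n ℓ (j+1)) ℓ hAmbrank ℓ P
                (le_inf hPA hPZ) hPrank (by omega)
            have hBA : B ≤ C (ℓ+1) := hB2.trans inf_le_left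
            have hBZ : B ≤ Zsub n ℓ (j+1) := hB2.trans inf_le_right
            have hBinv := inv_step n ℓ (j+1) (by omega) (by omega) (C (ℓ+1)) B hA3 hBA hBZ
            refine ⟨fun i => if i = ℓ then B else C i, ?_⟩
            intro i hi1 hi2 hi3
            beta_reduce
            by_cases hiℓ : i = ℓ
            · subst hiℓ
              rw [if_pos rfl, if_neg (show ¬ (ℓ + 1 = ℓ) by omega)]
              exact ⟨hB3, hBZ, hBinv, fun _ => hB1, fun _ => hBA, fun h => absurd h (by omega)⟩
            · have hge : itop - t ≤ i := by omega
              rw [if_neg hiℓ, if_neg (show ¬ (i + 1 = ℓ) by omega)]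
              exact hC i hi1 hge hi3
          · refine ⟨C, ?_⟩
            intro i hi1 hi2 hi3
            exact hC i hi1 (by omega) hi3
      obtain ⟨C, hC⟩ := col (itop - 1)
      have hCfull : ∀ i, 1 ≤ i → i ≤ itop →
          Module.finrank ℂ (C i) = i ∧
          C i ≤ Zsub n i (j+1) ∧
          IsIsotropic n (Submodule.map (prChain n ((j+1)+1) (2*n - i)) (C i)) ∧
          (i ≤ j → Submodule.map (prj n (j+1)) (Vf i j) ≤ C i) ∧
          (i + 1 ≤ itop → C i ≤ C (i+1)) ∧
          (i = j+1 → C i = V i) := by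
        intro i hi1 hi2
        exact hC i hi1 (by omega) hi2
      refine ⟨fun i j' => if j' = j + 1 then C i else Vf i j', ?_, ?_, ?_, ?_⟩
      · intro i j' hi hij h2n hjm
        beta_reduce
        by_cases hj' : j' = j + 1
        · subst hj'
          rw [if_pos rfl]
          obtain ⟨hc1, hc2, hc3, _, _, _⟩ := hCfull i hi (by omega)
          exact ⟨hc1, hc2, hc3⟩
        · rw [if_neg hj']
          exact hg1 i j' hi hij h2n (by omega)
      · intro i j' hi hij h2n hjm
        beta_reduce
        by_cases hj' : j' = j + 1
        · subst hj'
          rw [if_pos rfl, if_pos rfl]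
          exact (hCfull i hi (by omega)).2.2.2.2.1 (by omega)
        · rw [if_neg hj', if_neg hj']
          exact hg2 i j' hi hij h2n (by omega)
      · intro i j' hi hij h2n hjm
        beta_reduce
        by_cases hj' : j' + 1 = j + 1
        · have hj'' : j' = j := by omega
          subst hj''
          rw [if_pos rfl, if_neg (by omega)]
          exact (hCfull i hi (by omega)).2.2.2.1 (by omega)
        · rw [if_neg hj', if_neg (by omega)]
          exact hg3 i j' hi hij h2n (by omega)
      · intro i hi hin him
        beta_reduce
        by_cases hii : i = j + 1
        · subst hii
          rw [if_pos rfl]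
          exact (hCfull (j+1) hi (by omega)).2.2.2.2.2 rfl
        · rw [if_neg hii]
          exact hg4 i hi hin (by omega)
theorem statement5 (n : ℕ) (hn : 1 ≤ n) (V : ℕ → Submodule ℂ (Wsp n))
    (hdim : ∀ i, 1 ≤ i → i ≤ n → Module.finrank ℂ (V i) = i)
    (hpr : ∀ i, 1 ≤ i → i ≤ n - 1 → Submodule.map (prj n (i + 1)) (V i) ≤ V (i + 1))
    (hiso : ∀ i, 1 ≤ i → i ≤ n →
      IsIsotropic n (Submodule.map (prChain n (i + 1) (2*n - i)) (V i))) :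
    ∃ Vf : ℕ → ℕ → Submodule ℂ (Wsp n),
      IsSpR n Vf ∧ ∀ i, 1 ≤ i → i ≤ n → Vf i i = V i := by
  obtain ⟨Vf, hg1, hg2, hg3, hg4⟩ := goodcols_exists n hn V hdim hpr hiso (2*n - 1) (by omega)
  refine ⟨Vf, ⟨?_, ?_, ?_, ?_, ?_⟩, ?_⟩
  · intro i j h1 h2 h3
    exact (hg1 i j h1 h2 h3 (by omega)).1
  · intro i j h1 h2 h3
    rw [WIJ_eq_Zsub]
    exact (hg1 i j h1 h2 h3 (by omega)).2.1
  · intro i j h1 h2 h3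
    exact hg2 i j h1 h2 h3 (by omega)
  · intro i j h1 h2 h3
    exact hg3 i j h1 h2 h3 (by omega)
  · intro i h1 h2
    have h := (hg1 i (2*n - i) h1 (by omega) (by omega) (by omega)).2.2
    rw [prChain_id n ((2*n - i)+1) (2*n - i) (by omega), Submodule.map_id] at h
    exact h
  · intro i h1 h2
    exact hg4 i h1 h2 (by omega)
end
end

section
/- Let (V_1,…,V_{2n−1}) be a complete degenerate flag in W, i.e. dim V_i = i for all i and pr_{i+1}(V_i) ⊆ V_{i+1} for 1 ≤ i ≤ 2n−2. Define σ(V_1,…,V_{2n−1}) = (V_{2n−1}^⊥, V_{2n−2}^⊥, …, V_1^⊥), where U^⊥ = {w ∈ W : ⟨w, u⟩ = 0 for all u ∈ U}. Then σ(V_1,…,V_{2n−1}) is again a complete degenerate flag (in particular dim V_{2n−i}^⊥ = i and pr_{i+1}(V_{2n−i}^⊥) ⊆ V_{2n−i−1}^⊥ for all i), and σ ∘ σ is the identity on the set of complete degenerate flags. -/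
noncomputable section

namespace S7

open Module

variable {n : ℕ}

lemma mem_sperp {U : Submodule ℂ (Wsp n)} {x : Wsp n} :
    x ∈ sperp n U ↔ ∀ u ∈ U, sform n x u = 0 := Iff.rfl

/-- The form as a bilinear map. -/
def sformB (n : ℕ) : Wsp n →ₗ[ℂ] Wsp n →ₗ[ℂ] ℂ :=
  LinearMap.mk₂ ℂ (sform n)
    (by
      intro x x' y
      simp only [sform, Pi.add_apply]
      rw [← Finset.sum_add_distrib]
      exact Finset.sum_congr rfl fun i _ => by ring)
    (by
      intro c x y
      simp only [sform, Pi.smul_apply, smul_eq_mul, Finset.mul_sum]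
      exact Finset.sum_congr rfl fun i _ => by ring)
    (by
      intro x y y'
      simp only [sform, Pi.add_apply]
      rw [← Finset.sum_add_distrib]
      exact Finset.sum_congr rfl fun i _ => by ring)
    (by
      intro c x y
      simp only [sform, Pi.smul_apply, smul_eq_mul, Finset.mul_sum]
      exact Finset.sum_congr rfl fun i _ => by ring)

lemma sform_skew (x y : Wsp n) : sform n y x = - sform n x y := by
  unfold sform
  rw [← Finset.sum_neg_distrib]
  apply Fintype.sum_equiv Fin.revPerm
  intro i
  have hi := i.isLt
  have h1 : ((Fin.revPerm i : Fin (2*n)) : ℕ) = 2*n - 1 - (i : ℕ) := by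
    simp [Fin.revPerm_apply, Fin.val_rev]; omega
  have hx' : x (Fin.revPerm i) = x ⟨2*n - 1 - (i : ℕ), by omega⟩ := congrArg x (Fin.ext h1)
  have hy' : y ⟨2*n - 1 - ((Fin.revPerm i : Fin (2*n)) : ℕ), by
      have := (Fin.revPerm i).isLt; omega⟩ = y i := congrArg y (Fin.ext (by simp only [h1]; omega))
  rw [hx', hy']
  simp only [h1]
  rcases lt_or_ge (i : ℕ) n with h | h
  · rw [if_neg (show ¬ (2*n - 1 - (i:ℕ) < n) by omega), if_pos h]; ring
  · rw [if_pos (show 2*n - 1 - (i:ℕ) < n by omega), if_neg (show ¬ ((i:ℕ) < n) by omega)]; ring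

lemma sformB_inj : Function.Injective (sformB n) := by
  rw [injective_iff_map_eq_zero]
  intro x hx
  funext j
  have hj := j.isLt
  set j' : Fin (2*n) := ⟨2*n - 1 - (j : ℕ), by omega⟩ with hj'
  have h := congrArg (fun φ => φ (Pi.single j' 1)) hx
  simp only [LinearMap.zero_apply] at h
  have hx' : sform n x (Pi.single j' 1) = 0 := h
  unfold sform at hx'
  rw [Finset.sum_eq_single j] at hx'
  · have hidx : (⟨2*n - 1 - (j : ℕ), by omega⟩ : Fin (2*n)) = j' := rfl
    rw [hidx, Pi.single_eq_same] at hx'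
    rcases lt_or_ge (j : ℕ) n with h | h
    · rw [if_pos h] at hx'; simpa using hx'
    · rw [if_neg (by omega)] at hx'; simpa using hx'
  · intro b _ hb
    have hbl := b.isLt
    have : (⟨2*n - 1 - (b : ℕ), by omega⟩ : Fin (2*n)) ≠ j' := by
      intro hcontra
      have := congrArg Fin.val hcontra
      simp only [hj'] at this
      exact hb (Fin.ext (by omega))
    rw [Pi.single_eq_of_ne this, mul_zero]
  · intro hmem; exact absurd (Finset.mem_univ _) hmem

lemma sperp_eq_comap (U : Submodule ℂ (Wsp n)) :
    sperp n U = U.dualAnnihilator.comap (sformB n) := by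
  ext x
  simp only [mem_sperp, Submodule.mem_comap, Submodule.mem_dualAnnihilator]
  rfl

lemma finrank_sperp_add (U : Submodule ℂ (Wsp n)) :
    finrank ℂ (sperp n U) + finrank ℂ U = 2*n := by
  have hfr : finrank ℂ (Wsp n) = 2*n := Module.finrank_fin_fun ℂ
  have hbij : Function.Bijective (sformB n) := by
    refine ⟨sformB_inj, ?_⟩
    have heq : finrank ℂ (Wsp n) = finrank ℂ (Module.Dual ℂ (Wsp n)) :=
      Subspace.dual_finrank_eq.symm
    exact (LinearMap.injective_iff_surjective_of_finrank_eq_finrank heq).mp sformB_inj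
  let e : Wsp n ≃ₗ[ℂ] Module.Dual ℂ (Wsp n) := LinearEquiv.ofBijective _ hbij
  have hcomap : sperp n U = U.dualAnnihilator.comap (e : Wsp n →ₗ[ℂ] Module.Dual ℂ (Wsp n)) :=
    sperp_eq_comap U
  rw [hcomap, Submodule.comap_equiv_eq_map_symm]
  rw [LinearEquiv.finrank_map_eq]
  have := (Subspace.quotEquivAnnihilator U).finrank_eq
  have hq := Submodule.finrank_quotient_add_finrank U
  rw [hfr] at hq
  omega

lemma le_sperp_sperp (U : Submodule ℂ (Wsp n)) : U ≤ sperp n (sperp n U) := by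
  intro u hu z hz
  rw [sform_skew, hz u hu, neg_zero]

lemma sform_prj (k : ℕ) (hk1 : 1 ≤ k) (hk2 : k ≤ 2*n) (x y : Wsp n) :
    sform n (prj n k x) y = sform n x (prj n (2*n+1-k) y) := by
  unfold sform prj
  refine Finset.sum_congr rfl fun i _ => ?_
  have hi := i.isLt
  simp only [LinearMap.coe_mk, AddHom.coe_mk]
  rcases eq_or_ne ((i : ℕ) + 1) k with h | h
  · rw [if_pos h]
    rw [if_pos (show (2*n - 1 - (i:ℕ)) + 1 = 2*n + 1 - k by omega)]
    ring
  · rw [if_neg h]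
    rw [if_neg (show ¬ ((2*n - 1 - (i:ℕ)) + 1 = 2*n + 1 - k) by omega)]

end S7

theorem statement7 (n : ℕ) (hn : 1 ≤ n) (V : ℕ → Submodule ℂ (Wsp n))
    (hdim : ∀ i, 1 ≤ i → i ≤ 2*n - 1 → Module.finrank ℂ (V i) = i)
    (hpr : ∀ i, 1 ≤ i → i ≤ 2*n - 2 →
      Submodule.map (prj n (i + 1)) (V i) ≤ V (i + 1)) :
    (∀ i, 1 ≤ i → i ≤ 2*n - 1 → Module.finrank ℂ (sperp n (V (2*n - i))) = i) ∧
    (∀ i, 1 ≤ i → i ≤ 2*n - 2 →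
      Submodule.map (prj n (i + 1)) (sperp n (V (2*n - i))) ≤ sperp n (V (2*n - i - 1))) ∧
    (∀ i, 1 ≤ i → i ≤ 2*n - 1 → sperp n (sperp n (V i)) = V i) := by
  refine ⟨?_, ?_, ?_⟩
  · intro i hi1 hi2
    have hd : Module.finrank ℂ (V (2*n - i)) = 2*n - i := hdim (2*n - i) (by omega) (by omega)
    have := S7.finrank_sperp_add (V (2*n - i))
    omega
  · intro i hi1 hi2
    rintro y ⟨x, hx, rfl⟩
    intro u hu
    rw [S7.sform_prj (i+1) (by omega) (by omega)]
    have h1 : 2*n + 1 - (i+1) = 2*n - i := by omega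
    rw [h1]
    have hmem : prj n ((2*n - i - 1) + 1) u ∈ V ((2*n - i - 1) + 1) :=
      hpr (2*n - i - 1) (by omega) (by omega) ⟨u, hu, rfl⟩
    have h2 : (2*n - i - 1) + 1 = 2*n - i := by omega
    rw [h2] at hmem
    exact hx _ hmem
  · intro i hi1 hi2
    have hd : Module.finrank ℂ (V i) = i := hdim i hi1 hi2
    have h1 := S7.finrank_sperp_add (V i)
    have h2 := S7.finrank_sperp_add (sperp n (V i))
    symm
    exact Submodule.eq_of_le_of_finrank_le (S7.le_sperp_sperp (V i)) (by omega)
end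
end
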